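/- arXiv:2307.00288 — 12 statements merged into one kernel-verified Lean document; each statement's English description precedes it below -/
import Mathlib

section
/- For every band matrix M of type (r,q) with entries (a_{ik}), the determinants Δ_k built from the moments of M are nonzero for all k ≥ 0, and the entries of the extreme lower diagonal of M are recovered from the moments by the formula a_{i+q,i} = (Δ_{i+q} Δ_{i−1})/(Δ_{i+q−1} Δ_i) for all i ≥ 0. -/
open scoped BigOperators

noncomputable section

/-- The `j`-th standard basis sequence `e_j`. -/
def stdBasis (j : ℕ) : ℕ → ℂ := fun i => if i = j then 1 else 0

/-- Action of a band matrix with band width `r` above the diagonal on a sequence: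
`(M v)_i = Σ_k a_{ik} v_k` (a finite sum, since `a i k = 0` for `k > i + r`). -/
def bandApply (r : ℕ) (a : ℕ → ℕ → ℂ) (v : ℕ → ℂ) : ℕ → ℂ :=
  fun i => ∑ k ∈ Finset.range (i + r + 1), a i k * v k

/-- `a` is a band matrix of type `(r, q)`. -/
structure IsBandMatrix (r q : ℕ) (a : ℕ → ℕ → ℂ) : Prop where
  upper : ∀ i k, i + r < k → a i k = 0
  lower : ∀ i k, k + q < i → a i k = 0
  diag_one : ∀ i, a i (i + r) = 1
  diag_ne : ∀ i, a (i + q) i ≠ 0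

/-- The moments `S_k^{m,n} = (M^k e_{n-1})_{m-1}` of a band matrix. -/
def moment (r : ℕ) (a : ℕ → ℕ → ℂ) (k m n : ℕ) : ℂ :=
  (bandApply r a)^[k] (stdBasis (n - 1)) (m - 1)

/-- The determinants `Δ_k` built from a family of moments `S`:
`Δ_k = det (α_{ij})_{i,j=0}^k` with `α_{ij} = S_{⌊i/r⌋+⌊j/q⌋}^{(i mod r)+1, (j mod q)+1}`. -/
def deltaFromMoments (r q : ℕ) (S : ℕ → ℕ → ℕ → ℂ) (k : ℕ) : ℂ :=
  Matrix.det (Matrix.of fun i j : Fin (k + 1) =>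
    S ((i : ℕ) / r + (j : ℕ) / q) ((i : ℕ) % r + 1) ((j : ℕ) % q + 1))

/-- The shifted determinant sequence: `deltaSh r q S n = Δ_{n-1}`, with `Δ_{-1} = 1`. -/
def deltaSh (r q : ℕ) (S : ℕ → ℕ → ℕ → ℂ) : ℕ → ℂ
  | 0 => 1
  | n + 1 => deltaFromMoments r q S n

/-!
Writing `i = (i mod r) + ⌊i/r⌋ r` and `j = (j mod q) + ⌊j/q⌋ q`, the entry
`α_{ij} = (M^{⌊i/r⌋ + ⌊j/q⌋})_{i mod r, j mod q}` splits as the product of row `i mod r` of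
`M^{⌊i/r⌋}` and column `j mod q` of `M^{⌊j/q⌋}`. Restricted to indices `≤ k`, the first factor
is unit lower triangular (its diagonal is a power of the upper band of ones) and the second is
upper triangular with diagonal entry `c_j = ∏ a_{j' + q, j'}` over `j' = j - q, j - 2q, …, j mod q`.
Hence `Δ_k = c_0 ⋯ c_k ≠ 0`, and `c_{i+q} = c_i a_{i+q,i}` gives the formula for `a_{i+q,i}`.
-/

open Finset

/-- The entries `(M^s)_{m n}`. -/
def bandPow (r : ℕ) (a : ℕ → ℕ → ℂ) : ℕ → ℕ → ℕ → ℂ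
  | 0, m, n => stdBasis n m
  | s + 1, m, n => bandApply r a (fun k => bandPow r a s k n) m

def lowerDiagProd (q : ℕ) (a : ℕ → ℕ → ℂ) (j : ℕ) : ℂ :=
  ∏ u ∈ range (j / q), a (j % q + (u + 1) * q) (j % q + u * q)

section

variable {r q : ℕ} {a : ℕ → ℕ → ℂ}

lemma bandPow_eq_zero_of_lt {s m n : ℕ} (h : m + s * r < n) : bandPow r a s m n = 0 := by
  induction s generalizing m with
  | zero => simp only [bandPow, stdBasis]; rw [if_neg (by omega)]
  | succ s ih =>
    rw [bandPow, bandApply]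
    refine sum_eq_zero fun k hk => ?_
    rw [mem_range] at hk
    rw [ih (by rw [add_one_mul] at h; omega), mul_zero]

lemma bandPow_eq_zero_of_gt (ha : IsBandMatrix r q a) {s m n : ℕ} (h : n + s * q < m) :
    bandPow r a s m n = 0 := by
  induction s generalizing m with
  | zero => simp only [bandPow, stdBasis]; rw [if_neg (by omega)]
  | succ s ih =>
    rw [bandPow, bandApply]
    refine sum_eq_zero fun k _ => ?_
    by_cases hk : k + q < m
    · rw [ha.lower m k hk, zero_mul]
    · rw [ih (by rw [add_one_mul] at h; omega), mul_zero]

lemma bandPow_upper_diag (ha : IsBandMatrix r q a) (s m : ℕ) :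
    bandPow r a s m (m + s * r) = 1 := by
  induction s generalizing m with
  | zero => simp [bandPow, stdBasis]
  | succ s ih =>
    rw [bandPow, bandApply, sum_eq_single_of_mem (m + r) (by simp), ha.diag_one,
      one_mul, add_one_mul, ← add_assoc, ← add_right_comm, ih]
    intro k hk hne
    rw [mem_range] at hk
    rw [bandPow_eq_zero_of_lt (by rw [add_one_mul]; omega), mul_zero]

lemma bandPow_lower_diag (ha : IsBandMatrix r q a) (s n : ℕ) :
    bandPow r a s (n + s * q) n = ∏ u ∈ range s, a (n + (u + 1) * q) (n + u * q) := by
  induction s with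
  | zero => simp [bandPow, stdBasis]
  | succ s ih =>
    have hmem : n + s * q ∈ range (n + (s + 1) * q + r + 1) := by
      rw [mem_range, add_one_mul]; omega
    rw [bandPow, bandApply, sum_eq_single_of_mem _ hmem, ih, prod_range_succ, mul_comm]
    intro k _ hne
    by_cases hk : k + q < n + (s + 1) * q
    · rw [ha.lower _ k hk, zero_mul]
    · rw [bandPow_eq_zero_of_gt ha (by rw [add_one_mul] at hk; omega), mul_zero]

lemma iterate_bandApply_stdBasis (s n : ℕ) :
    (bandApply r a)^[s] (stdBasis n) = fun m => bandPow r a s m n := by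
  induction s with
  | zero => rfl
  | succ s ih => rw [Function.iterate_succ_apply', ih]; rfl

lemma iterate_bandApply_apply (s : ℕ) (v : ℕ → ℂ) (m : ℕ) :
    (bandApply r a)^[s] v m = ∑ n ∈ range (m + s * r + 1), bandPow r a s m n * v n := by
  induction s generalizing m with
  | zero => simp [bandPow, stdBasis]
  | succ s ih =>
    have extend (k : ℕ) (hk : k ∈ range (m + r + 1)) :
        a m k * (bandApply r a)^[s] v k =
          ∑ n ∈ range (m + (s + 1) * r + 1), a m k * (bandPow r a s k n * v n) := by
      rw [mem_range] at hk
      rw [ih, mul_sum]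
      refine sum_subset (fun n hn => ?_) fun n _ hn => ?_
      · simp only [mem_range] at hn ⊢; rw [add_one_mul]; omega
      · rw [mem_range, not_lt] at hn
        rw [bandPow_eq_zero_of_lt (by omega), zero_mul, mul_zero]
    rw [Function.iterate_succ_apply', bandApply, sum_congr rfl extend, sum_comm]
    simp only [bandPow, bandApply, sum_mul, mul_assoc]

lemma moment_add (s t m n : ℕ) :
    moment r a (s + t) (m + 1) (n + 1) =
      ∑ k ∈ range (m + s * r + 1), bandPow r a s m k * bandPow r a t k n := by
  rw [moment, Nat.add_sub_cancel, Nat.add_sub_cancel, Function.iterate_add_apply,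
    iterate_bandApply_apply, iterate_bandApply_stdBasis]

lemma momentMatrix_eq_mul (k : ℕ) :
    (Matrix.of fun i j : Fin (k + 1) =>
      moment r a ((i : ℕ) / r + (j : ℕ) / q) ((i : ℕ) % r + 1) ((j : ℕ) % q + 1)) =
    (Matrix.of fun (i n : Fin (k + 1)) => bandPow r a ((i : ℕ) / r) ((i : ℕ) % r) n) *
      Matrix.of fun (n j : Fin (k + 1)) => bandPow r a ((j : ℕ) / q) n ((j : ℕ) % q) := by
  ext i j
  have hi : (i : ℕ) % r + (i : ℕ) / r * r = i := Nat.mod_add_div' i r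
  rw [Matrix.of_apply, moment_add, Matrix.mul_apply]
  simp only [Matrix.of_apply]
  rw [Fin.sum_univ_eq_sum_range (fun n => bandPow r a _ _ n * bandPow r a _ n _)]
  refine sum_subset (fun n hn => ?_) fun n _ hn => ?_
  · simp only [mem_range] at hn ⊢; omega
  · rw [mem_range, not_lt] at hn
    rw [bandPow_eq_zero_of_lt (by omega), zero_mul]

lemma det_bandPow_rows (ha : IsBandMatrix r q a) (k : ℕ) :
    (Matrix.of fun (i n : Fin (k + 1)) => bandPow r a ((i : ℕ) / r) ((i : ℕ) % r) n).det = 1 := by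
  have hi (i : ℕ) : i % r + i / r * r = i := Nat.mod_add_div' i r
  refine (Matrix.det_of_isLowerTriangular _ fun i n (hin : i < n) =>
    bandPow_eq_zero_of_lt (by rw [hi]; exact hin)).trans ?_
  refine prod_eq_one fun i _ => ?_
  simpa only [hi] using bandPow_upper_diag ha ((i : ℕ) / r) ((i : ℕ) % r)

lemma det_bandPow_cols (ha : IsBandMatrix r q a) (k : ℕ) :
    (Matrix.of fun (n j : Fin (k + 1)) => bandPow r a ((j : ℕ) / q) n ((j : ℕ) % q)).det =
      ∏ j ∈ range (k + 1), lowerDiagProd q a j := by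
  have hj (j : ℕ) : j % q + j / q * q = j := Nat.mod_add_div' j q
  refine (Matrix.det_of_isUpperTriangular fun n j (hjn : j < n) =>
    bandPow_eq_zero_of_gt ha (by rw [hj]; exact hjn)).trans ?_
  rw [← Fin.prod_univ_eq_prod_range]
  refine prod_congr rfl fun j _ => ?_
  rw [lowerDiagProd]
  simpa only [hj] using bandPow_lower_diag (r := r) ha ((j : ℕ) / q) ((j : ℕ) % q)

lemma deltaSh_moment_eq_prod (ha : IsBandMatrix r q a) (n : ℕ) :
    deltaSh r q (moment r a) n = ∏ j ∈ range n, lowerDiagProd q a j := by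
  cases n with
  | zero => rfl
  | succ k =>
    rw [deltaSh, deltaFromMoments, momentMatrix_eq_mul, Matrix.det_mul, det_bandPow_rows ha,
      det_bandPow_cols ha, one_mul]

lemma lowerDiagProd_ne_zero (ha : IsBandMatrix r q a) (j : ℕ) : lowerDiagProd q a j ≠ 0 :=
  prod_ne_zero_iff.mpr fun u _ => by
    rw [add_one_mul, ← add_assoc]
    exact ha.diag_ne _

lemma lowerDiagProd_add_self (hq : 0 < q) (i : ℕ) :
    lowerDiagProd q a (i + q) = lowerDiagProd q a i * a (i + q) i := by
  have hi : i % q + i / q * q = i := Nat.mod_add_div' i q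
  rw [lowerDiagProd, Nat.add_mod_right, Nat.add_div_right i hq, prod_range_succ, add_one_mul,
    ← add_assoc, hi, lowerDiagProd]

end

theorem delta_ne_zero_and_extreme_diagonal_formula_general (r q : ℕ) (hq : 1 ≤ q)
    (a : ℕ → ℕ → ℂ) (ha : IsBandMatrix r q a) :
    (∀ k, deltaFromMoments r q (moment r a) k ≠ 0) ∧
    (∀ i, a (i + q) i =
      deltaSh r q (moment r a) (i + q + 1) * deltaSh r q (moment r a) i /
        (deltaSh r q (moment r a) (i + q) * deltaSh r q (moment r a) (i + 1))) := by
  have hΔ := deltaSh_moment_eq_prod ha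
  have hc := lowerDiagProd_ne_zero ha
  have hprod (n : ℕ) : ∏ j ∈ range n, lowerDiagProd q a j ≠ 0 :=
    prod_ne_zero_iff.mpr fun j _ => hc j
  refine ⟨fun k => ?_, fun i => ?_⟩
  · show deltaSh r q (moment r a) (k + 1) ≠ 0
    exact hΔ (k + 1) ▸ hprod (k + 1)
  · rw [hΔ, hΔ, hΔ, hΔ, prod_range_succ, prod_range_succ, lowerDiagProd_add_self hq,
      eq_div_iff (mul_ne_zero (hprod _) (mul_ne_zero (hprod _) (hc i)))]
    ring

/-- For every band matrix `M` of type `(r,q)` the determinants `Δ_k` built from its moments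
are all nonzero, and `a_{i+q,i} = (Δ_{i+q} Δ_{i−1}) / (Δ_{i+q−1} Δ_i)` for all `i ≥ 0`. -/
theorem delta_ne_zero_and_extreme_diagonal_formula (r q : ℕ) (hr : 1 ≤ r) (hq : 1 ≤ q)
    (a : ℕ → ℕ → ℂ) (ha : IsBandMatrix r q a) :
    (∀ k, deltaFromMoments r q (moment r a) k ≠ 0) ∧
    (∀ i, a (i + q) i =
      deltaSh r q (moment r a) (i + q + 1) * deltaSh r q (moment r a) i /
        (deltaSh r q (moment r a) (i + q) * deltaSh r q (moment r a) (i + 1))) :=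
  delta_ne_zero_and_extreme_diagonal_formula_general r q hq a ha
end
end

section
/- For every band matrix M of type (r,q) with entries (a_{ik}), the determinants Δ_k built from the moments of M satisfy Δ_0 = Δ_1 = ⋯ = Δ_{q−1} = 1, and for every i ≥ 0, setting h = ⌊(i+q)/q⌋, Δ_{i+q} = ∏_{s=1}^{h} ( ∏_{j=0}^{q−1} a_{i+q−(s−1)q−j, i−(s−1)q−j} )^s, where by convention any factor a_{m,k} with k < 0 is replaced by 1. (Explicitly: Δ_{i+q} = (a_{i+q,i}⋯a_{i+1,i−q+1}) (a_{i,i−q}⋯a_{i−q+1,i−2q+1})^2 ⋯ (a_{i−(h−2)q,i−(h−1)q}⋯a_{q,0})^h.) -/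
open scoped BigOperators

noncomputable section

/-- The entries of a band matrix extended by the convention that any entry `a_{m,k}`
with a negative column index `k < 0` is replaced by `1`. -/
def entryExt (a : ℕ → ℕ → ℂ) (m k : ℤ) : ℂ :=
  if k < 0 then 1 else a m.toNat k.toNat


/-!
The moment matrix factors as `L * U`, where row `i` of `L` is row `i mod r` of `M^⌊i/r⌋` and
column `j` of `U` is column `j mod q` of `M^⌊j/q⌋`. The power `M^p` vanishes to the right of its
`p r`-th superdiagonal, which consists of ones, and below its `p q`-th subdiagonal. Hence `L` is
unipotent lower triangular and `U` is upper triangular, its `j`-th diagonal entry `u_j` being the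
product of the entries `a_{c+q,c}` with `c < j`, `c ≡ j mod q`; so `Δ_k = u_0 ⋯ u_k`.
From `u_{j+q} = u_j a_{j+q,j}` one gets `Δ_{k+q} = Δ_k C_k` with
`C_k = a_{q,0} a_{q+1,1} ⋯ a_{k+q,k}`, and cutting `C_k` into blocks of `q` consecutive factors
yields the product formula.
-/

open Finset

namespace BandMatrix

variable {r q : ℕ} {a : ℕ → ℕ → ℂ}

/-- The entry `(M^p)_{m,n}`. -/
def bandPow (r : ℕ) (a : ℕ → ℕ → ℂ) (p m n : ℕ) : ℂ :=
  (bandApply r a)^[p] (stdBasis n) m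

theorem bandPow_zero (m n : ℕ) : bandPow r a 0 m n = if m = n then 1 else 0 := rfl

theorem bandPow_succ (p m n : ℕ) :
    bandPow r a (p + 1) m n = ∑ c ∈ range (m + r + 1), a m c * bandPow r a p c n := by
  rw [bandPow, Function.iterate_succ_apply']
  rfl

theorem bandPow_add {N : ℕ} (p p' : ℕ) {m : ℕ} (hm : m + p * r < N) (n : ℕ) :
    bandPow r a (p + p') m n = ∑ c ∈ range N, bandPow r a p m c * bandPow r a p' c n := by
  induction p generalizing m with
  | zero => simp [bandPow_zero, show m < N by omega]
  | succ p ih =>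
    simp only [add_right_comm p 1 p', bandPow_succ, sum_mul]
    rw [sum_comm]
    refine sum_congr rfl fun c hc => ?_
    rw [mem_range] at hc
    rw [ih (by rw [add_one_mul] at hm; omega), mul_sum]
    simp only [mul_assoc]

theorem bandPow_eq_zero_of_lt {p m n : ℕ} (h : m + p * r < n) : bandPow r a p m n = 0 := by
  induction p generalizing m with
  | zero => rw [bandPow_zero, if_neg (by omega)]
  | succ p ih =>
    rw [bandPow_succ]
    refine sum_eq_zero fun c hc => ?_
    rw [mem_range] at hc
    rw [ih (by rw [add_one_mul] at h; omega), mul_zero]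

theorem bandPow_superdiag (hdiag : ∀ i, a i (i + r) = 1) (p m : ℕ) :
    bandPow r a p m (m + p * r) = 1 := by
  induction p generalizing m with
  | zero => simp [bandPow_zero]
  | succ p ih =>
    rw [bandPow_succ, sum_eq_single (m + r)]
    · rw [hdiag, one_mul, add_one_mul, add_comm (p * r), ← add_assoc, ih]
    · intro c hc hne
      rw [mem_range] at hc
      rw [bandPow_eq_zero_of_lt (by rw [add_one_mul]; omega), mul_zero]
    · simp

theorem bandPow_eq_zero_of_gt (hlower : ∀ i k, k + q < i → a i k = 0) {p m n : ℕ}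
    (h : n + p * q < m) : bandPow r a p m n = 0 := by
  induction p generalizing m with
  | zero => rw [bandPow_zero, if_neg (by omega)]
  | succ p ih =>
    rw [bandPow_succ]
    refine sum_eq_zero fun c _ => ?_
    by_cases hc : n + p * q < c
    · rw [ih hc, mul_zero]
    · rw [hlower m c (by rw [add_one_mul] at h; omega), zero_mul]

theorem bandPow_subdiag (hlower : ∀ i k, k + q < i → a i k = 0) (p n : ℕ) :
    bandPow r a p (n + p * q) n = ∏ t ∈ range p, a (n + (t + 1) * q) (n + t * q) := by
  induction p with
  | zero => simp [bandPow_zero]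
  | succ p ih =>
    rw [bandPow_succ, sum_eq_single (n + p * q), ih, prod_range_succ, mul_comm]
    · intro c _ hne
      by_cases hc : n + p * q < c
      · rw [bandPow_eq_zero_of_gt hlower hc, mul_zero]
      · rw [hlower _ c (by rw [add_one_mul]; omega), zero_mul]
    · intro h
      exact absurd (mem_range.2 (by rw [add_one_mul]; omega)) h

/-- The `j`-th diagonal entry `u_j` of the upper triangular factor `U`. -/
def subdiagChain (q : ℕ) (a : ℕ → ℕ → ℂ) (j : ℕ) : ℂ :=
  ∏ t ∈ range (j / q), a (j % q + (t + 1) * q) (j % q + t * q)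

theorem moment_add_one_add_one (p m n : ℕ) : moment r a p (m + 1) (n + 1) = bandPow r a p m n :=
  rfl

theorem momentMatrix_eq_mul (k : ℕ) :
    (Matrix.of fun i j : Fin (k + 1) =>
      moment r a ((i : ℕ) / r + (j : ℕ) / q) ((i : ℕ) % r + 1) ((j : ℕ) % q + 1)) =
    (Matrix.of fun i c : Fin (k + 1) => bandPow r a ((i : ℕ) / r) ((i : ℕ) % r) c) *
    (Matrix.of fun c j : Fin (k + 1) => bandPow r a ((j : ℕ) / q) c ((j : ℕ) % q)) := by
  ext i j
  have hi : (i : ℕ) % r + (i : ℕ) / r * r < k + 1 := by rw [Nat.mod_add_div']; exact i.isLt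
  simp only [Matrix.mul_apply, Matrix.of_apply, moment_add_one_add_one]
  rw [Fin.sum_univ_eq_sum_range (fun c =>
    bandPow r a ((i : ℕ) / r) ((i : ℕ) % r) c * bandPow r a ((j : ℕ) / q) c ((j : ℕ) % q)),
    ← bandPow_add _ _ hi]

theorem deltaFromMoments_moment (hdiag : ∀ i, a i (i + r) = 1)
    (hlower : ∀ i k, k + q < i → a i k = 0) (k : ℕ) :
    deltaFromMoments r q (moment r a) k = ∏ j ∈ range (k + 1), subdiagChain q a j := by
  rw [deltaFromMoments, momentMatrix_eq_mul, Matrix.det_mul, Matrix.det_of_isLowerTriangular,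
    Matrix.det_of_isUpperTriangular, ← Fin.prod_univ_eq_prod_range]
  · have hL (i : ℕ) : bandPow r a (i / r) (i % r) i = 1 := by
      simpa only [Nat.mod_add_div'] using bandPow_superdiag hdiag (i / r) (i % r)
    have hU (j : ℕ) : bandPow r a (j / q) j (j % q) = subdiagChain q a j := by
      rw [subdiagChain]
      simpa only [Nat.mod_add_div'] using bandPow_subdiag (r := r) hlower (j / q) (j % q)
    simp only [Matrix.of_apply, hL, hU, prod_const_one, one_mul]
  · intro c j hjc
    exact bandPow_eq_zero_of_gt hlower (by rw [Nat.mod_add_div']; exact hjc)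
  · intro i c hic
    exact bandPow_eq_zero_of_lt (by rw [Nat.mod_add_div']; exact hic)

def subdiagPrefix (q : ℕ) (a : ℕ → ℕ → ℂ) (n : ℕ) : ℂ :=
  ∏ c ∈ range n, a (c + q) c

/-- The block of `q` consecutive factors `a_{c+q,c}`, `m - q < c ≤ m`, where `a_{c+q,c} = 1`
for `c < 0`. -/
def subdiagWindow (q : ℕ) (a : ℕ → ℕ → ℂ) (m : ℤ) : ℂ :=
  ∏ j ∈ range q, entryExt a (m + q - j) (m - j)

theorem entryExt_of_eq_natCast {x y : ℤ} {m k : ℕ} (hx : x = m) (hy : y = k) :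
    entryExt a x y = a m k := by
  subst hx hy
  simp [entryExt]

theorem entryExt_of_neg {x y : ℤ} (hy : y < 0) : entryExt a x y = 1 :=
  if_pos hy

theorem subdiagChain_of_lt {j : ℕ} (h : j < q) : subdiagChain q a j = 1 := by
  simp [subdiagChain, Nat.div_eq_of_lt h]

theorem subdiagChain_add_self (hq : 0 < q) (j : ℕ) :
    subdiagChain q a (j + q) = subdiagChain q a j * a (j + q) j := by
  rw [subdiagChain, Nat.add_div_right j hq, Nat.add_mod_right, prod_range_succ, add_one_mul,
    ← add_assoc, Nat.mod_add_div', subdiagChain]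

theorem prod_subdiagChain_add (hq : 0 < q) (n : ℕ) :
    ∏ j ∈ range (n + q), subdiagChain q a j =
      (∏ j ∈ range n, subdiagChain q a j) * subdiagPrefix q a n := by
  induction n with
  | zero =>
    simp only [zero_add, prod_range_zero, subdiagPrefix, mul_one]
    exact prod_eq_one fun j hj => subdiagChain_of_lt (mem_range.1 hj)
  | succ n ih =>
    rw [add_right_comm, prod_range_succ, ih, subdiagChain_add_self hq, subdiagPrefix,
      subdiagPrefix, prod_range_succ, prod_range_succ]
    ring

theorem subdiagWindow_of_lt {i : ℕ} (h : i < q) :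
    subdiagWindow q a i = subdiagPrefix q a (i + 1) := by
  obtain ⟨l, rfl⟩ := Nat.exists_eq_add_of_lt h
  rw [subdiagWindow, add_right_comm, prod_range_add]
  refine (congr_arg₂ (· * ·) ?_ (prod_eq_one fun j _ => entryExt_of_neg ?_)).trans (mul_one _)
  · rw [subdiagPrefix, ← prod_range_reflect]
    refine prod_congr rfl fun j hj => entryExt_of_eq_natCast ?_ ?_ <;>
      · rw [mem_range] at hj
        omega
  · omega

theorem subdiagPrefix_add (i : ℕ) :
    subdiagPrefix q a (i + q + 1) = subdiagPrefix q a (i + 1) * subdiagWindow q a (i + q) := by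
  rw [subdiagPrefix, add_right_comm, prod_range_add, subdiagWindow]
  congr 1
  rw [← prod_range_reflect]
  refine prod_congr rfl fun j hj => (entryExt_of_eq_natCast ?_ ?_).symm <;>
    · rw [mem_range] at hj
      omega

theorem prod_range_add_self_div {M : Type*} [CommMonoid M] (hq : 0 < q) (f : ℕ → ℤ → M)
    (i : ℕ) :
    ∏ t ∈ range ((i + q + q) / q), f t (↑(i + q) - t * q) =
      f 0 (i + q) * ∏ t ∈ range ((i + q) / q), f (t + 1) (i - t * q) := by
  rw [Nat.add_div_right _ hq, prod_range_succ', mul_comm]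
  congr 1
  · simp
  · refine prod_congr rfl fun t _ => ?_
    congr 1
    push_cast
    ring

theorem prod_subdiagWindow (hq : 0 < q) (i : ℕ) :
    ∏ t ∈ range ((i + q) / q), subdiagWindow q a (i - t * q) = subdiagPrefix q a (i + 1) := by
  induction i using Nat.stepInduction q with
  | base i hi =>
    simp [Nat.add_div_right i hq, Nat.div_eq_of_lt hi, subdiagWindow_of_lt hi]
  | step i ih =>
    have ih : ∏ t ∈ range ((i + q) / q), subdiagWindow q a (i - t * q) =
        subdiagPrefix q a (i + 1) := by simpa using ih 0 hq
    rw [prod_range_add_self_div hq (fun _ m => subdiagWindow q a m), ih, subdiagPrefix_add,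
      mul_comm]

theorem prod_subdiagWindow_pow (hq : 0 < q) (i : ℕ) :
    ∏ t ∈ range ((i + q) / q), subdiagWindow q a (i - t * q) ^ (t + 1) =
      ∏ j ∈ range (i + q + 1), subdiagChain q a j := by
  induction i using Nat.stepInduction q with
  | base i hi =>
    rw [Nat.add_div_right i hq, Nat.div_eq_of_lt hi, add_right_comm, prod_subdiagChain_add hq,
      prod_eq_one fun j hj => subdiagChain_of_lt (by rw [mem_range] at hj; omega)]
    simp [subdiagWindow_of_lt hi]
  | step i ih =>
    have ih : ∏ t ∈ range ((i + q) / q), subdiagWindow q a (i - t * q) ^ (t + 1) =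
        ∏ j ∈ range (i + q + 1), subdiagChain q a j := by simpa using ih 0 hq
    rw [prod_range_add_self_div hq (fun t m => subdiagWindow q a m ^ (t + 1))]
    simp only [pow_succ _ (_ + 1), prod_mul_distrib, ih, prod_subdiagWindow hq]
    rw [show i + q + q + 1 = i + q + 1 + q by ring, prod_subdiagChain_add hq, subdiagPrefix_add]
    ring

end BandMatrix

open BandMatrix

theorem delta_product_formula_general (r q : ℕ) (hq : 1 ≤ q)
    (a : ℕ → ℕ → ℂ) (ha : IsBandMatrix r q a) :
    (∀ k, k < q → deltaFromMoments r q (moment r a) k = 1) ∧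
    (∀ i : ℕ, deltaFromMoments r q (moment r a) (i + q) =
      ∏ s ∈ Finset.Icc 1 ((i + q) / q),
        (∏ j ∈ Finset.range q,
          entryExt a ((i : ℤ) + q - ((s : ℤ) - 1) * q - j)
            ((i : ℤ) - ((s : ℤ) - 1) * q - j)) ^ s) := by
  have hΔ := deltaFromMoments_moment (r := r) ha.diag_one ha.lower
  refine ⟨fun k hk => ?_, fun i => ?_⟩
  · rw [hΔ]
    exact prod_eq_one fun j hj => subdiagChain_of_lt (by rw [mem_range] at hj; omega)
  · rw [hΔ, ← prod_subdiagWindow_pow hq, ← Ico_add_one_right_eq_Icc,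
      ← Nat.Ico_zero_eq_range, ← prod_Ico_add' _ 0 _ 1]
    refine prod_congr rfl fun t _ => ?_
    rw [subdiagWindow]
    congr 1
    refine prod_congr rfl fun j _ => ?_
    congr 1 <;> push_cast <;> ring

/-- `Δ_0 = ⋯ = Δ_{q−1} = 1`, and
`Δ_{i+q} = ∏_{s=1}^{h} ( ∏_{j=0}^{q−1} a_{i+q−(s−1)q−j, i−(s−1)q−j} )^s` where
`h = ⌊(i+q)/q⌋`, with the convention that factors with negative column index equal `1`. -/
theorem delta_product_formula (r q : ℕ) (hr : 1 ≤ r) (hq : 1 ≤ q)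
    (a : ℕ → ℕ → ℂ) (ha : IsBandMatrix r q a) :
    (∀ k, k < q → deltaFromMoments r q (moment r a) k = 1) ∧
    (∀ i : ℕ, deltaFromMoments r q (moment r a) (i + q) =
      ∏ s ∈ Finset.Icc 1 ((i + q) / q),
        (∏ j ∈ Finset.range q,
          entryExt a ((i : ℤ) + q - ((s : ℤ) - 1) * q - j)
            ((i : ℤ) - ((s : ℤ) - 1) * q - j)) ^ s) :=
  delta_product_formula_general r q hq a ha
end
end

section
/- For the matrix L1 built from nonzero complex numbers (a_i)_{i≥0} and p ≥ 1, the moments satisfy: S_0^1 = 1, S_{m−1}^m = a_0 a_1 ⋯ a_{m−2} for every 2 ≤ m ≤ p, and S_{p+1}^1 = a_0 a_1 ⋯ a_{p−1}. -/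
open scoped BigOperators

noncomputable section

/-- Entries of the matrix `L1`: `(L1)_{i,i+p} = 1`, `(L1)_{i+1,i} = a_i`, other entries zero. -/
def L1entry (p : ℕ) (a : ℕ → ℂ) : ℕ → ℕ → ℂ :=
  fun i k => if k = i + p then 1 else if i = k + 1 then a k else 0

/-- Action of `L1` on a sequence: `(L1 v)_i = Σ_k (L1)_{ik} v_k` (a finite sum). -/
def L1apply (p : ℕ) (a : ℕ → ℂ) (v : ℕ → ℂ) : ℕ → ℂ :=
  fun i => ∑ k ∈ Finset.range (i + p + 1), L1entry p a i k * v k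

/-- The moments of `L1`: `S_k^m = (L1^k e_0)_{m-1}`. -/
def momL1 (p : ℕ) (a : ℕ → ℂ) (k m : ℕ) : ℂ :=
  (L1apply p a)^[k] (stdBasis 0) (m - 1)

/-!
Each application of `L1` to a multiple of `e_j` gives a multiple of `e_{j+1}` (weight `a_j`),
plus a multiple of `e_{j-p}` once `j ≥ p`. Hence `L1^k e_0 = a_0 ⋯ a_{k-1} e_k` for `k ≤ p`,
and one more step sends `e_p` back to `e_0` with weight `1`.
-/

theorem L1apply_single (p : ℕ) (a : ℕ → ℂ) (c : ℂ) (j : ℕ) :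
    L1apply p a (fun x => if x = j then c else 0) =
      fun i => (if j = i + p then c else 0) + (if i = j + 1 then a j * c else 0) := by
  funext i
  simp only [L1apply, L1entry, mul_ite, mul_zero, Finset.sum_ite_eq', Finset.mem_range]
  split_ifs <;> first | omega | simp

theorem iterate_L1apply_stdBasis_zero (p : ℕ) (a : ℕ → ℂ) {k : ℕ} (hk : k ≤ p) :
    (L1apply p a)^[k] (stdBasis 0) = fun i => if i = k then ∏ t ∈ Finset.range k, a t else 0 := by
  induction k with
  | zero => funext i; simp [stdBasis]
  | succ k ih =>
    rw [Function.iterate_succ_apply', ih (by omega), L1apply_single]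
    funext i
    have hk' : k ≠ i + p := by omega
    by_cases hi : i = k + 1
    · subst hi
      simp [hk', Finset.prod_range_succ, mul_comm]
    · simp [hk', hi]

theorem momL1_values_general (p : ℕ) (a : ℕ → ℂ) :
    momL1 p a 0 1 = 1 ∧
    (∀ m, 2 ≤ m → m ≤ p → momL1 p a (m - 1) m = ∏ i ∈ Finset.range (m - 1), a i) ∧
    momL1 p a (p + 1) 1 = ∏ i ∈ Finset.range p, a i := by
  refine ⟨by simp [momL1, stdBasis], fun m _ hmp => ?_, ?_⟩
  · rw [momL1, iterate_L1apply_stdBasis_zero p a (by omega)]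
    simp
  · rw [momL1, Function.iterate_succ_apply', iterate_L1apply_stdBasis_zero p a le_rfl,
      L1apply_single]
    simp

/-- `S_0^1 = 1`, `S_{m-1}^m = a_0 ⋯ a_{m-2}` for `2 ≤ m ≤ p`, and
`S_{p+1}^1 = a_0 ⋯ a_{p-1}`. -/
theorem momL1_values (p : ℕ) (hp : 1 ≤ p) (a : ℕ → ℂ) (ha : ∀ i, a i ≠ 0) :
    momL1 p a 0 1 = 1 ∧
    (∀ m, 2 ≤ m → m ≤ p → momL1 p a (m - 1) m = ∏ i ∈ Finset.range (m - 1), a i) ∧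
    momL1 p a (p + 1) 1 = ∏ i ∈ Finset.range p, a i :=
  momL1_values_general p a
end
end

section
/- For the matrix L2 built from nonzero complex numbers (b_i)_{i≥0} and p ≥ 1, the moments satisfy: S̃_{n−1}^n = 1 and S̃_{n+p}^n = Σ_{l=0}^{n−1} b_l for every 1 ≤ n ≤ p. -/
/-! The column `j` of `L2` is `e_{j-1} + b_j e_{j+p}` (without the first term when `j = 0`), so by
linearity the moments `m_k(j) = (L2^k e_j)_0` satisfy `m_{k+1}(0) = b_0 m_k(p)` and
`m_{k+1}(j+1) = m_k(j) + b_{j+1} m_k(j+1+p)`. Each step lowers the index by at most one, so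
`m_k(j) = 0` for `k < j` and `m_j(j) = 1`; hence `m_{j+p+1}(j) = m_{j+p}(j-1) + b_j`, and
`m_{j+p+1}(j) = b_0 + ⋯ + b_j` by induction on `j`. -/

open scoped BigOperators

noncomputable section

/-- Entries of the matrix `L2`: `(L2)_{i,i+1} = 1`, `(L2)_{i+p,i} = b_i`, other entries zero. -/
def L2entry (p : ℕ) (b : ℕ → ℂ) : ℕ → ℕ → ℂ :=
  fun i k => if k = i + 1 then 1 else if i = k + p then b k else 0

/-- Action of `L2` on a sequence: `(L2 v)_i = Σ_k (L2)_{ik} v_k` (a finite sum). -/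
def L2apply (p : ℕ) (b : ℕ → ℂ) (v : ℕ → ℂ) : ℕ → ℂ :=
  fun i => ∑ k ∈ Finset.range (i + 2), L2entry p b i k * v k

/-- The moments of `L2`: `S̃_k^n = (L2^k e_{n-1})_0`. -/
def momL2 (p : ℕ) (b : ℕ → ℂ) (k n : ℕ) : ℂ :=
  (L2apply p b)^[k] (stdBasis (n - 1)) 0

section L2

variable (p : ℕ) (b : ℕ → ℂ)

def L2linearMap : Module.End ℂ (ℕ → ℂ) where
  toFun := L2apply p b
  map_add' u v := by
    funext i
    simp [L2apply, mul_add, Finset.sum_add_distrib]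
  map_smul' c v := by
    funext i
    simp [L2apply, Finset.mul_sum, mul_left_comm]

lemma L2apply_iterate_eq_pow (k : ℕ) : (L2apply p b)^[k] = ⇑(L2linearMap p b ^ k) :=
  (Module.End.coe_pow (L2linearMap p b) k).symm

lemma L2apply_stdBasis_zero : L2apply p b (stdBasis 0) = b 0 • stdBasis p := by
  funext i
  simp only [L2apply, L2entry, stdBasis, mul_ite, mul_one, mul_zero, Finset.sum_ite_eq',
    Finset.mem_range, Pi.smul_apply, smul_eq_mul]
  split_ifs <;> first | omega | simp_all

lemma L2apply_stdBasis_succ (j : ℕ) :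
    L2apply p b (stdBasis (j + 1)) = stdBasis j + b (j + 1) • stdBasis (j + 1 + p) := by
  funext i
  simp only [L2apply, L2entry, stdBasis, mul_ite, mul_one, mul_zero, Finset.sum_ite_eq',
    Finset.mem_range, Pi.add_apply, Pi.smul_apply, smul_eq_mul]
  split_ifs <;> first | omega | simp_all

lemma L2apply_iterate_succ_stdBasis_zero (k : ℕ) :
    (L2apply p b)^[k + 1] (stdBasis 0) 0 = b 0 * (L2apply p b)^[k] (stdBasis p) 0 := by
  rw [Function.iterate_succ_apply, L2apply_stdBasis_zero, L2apply_iterate_eq_pow, map_smul]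
  rfl

lemma L2apply_iterate_succ_stdBasis_succ (k j : ℕ) :
    (L2apply p b)^[k + 1] (stdBasis (j + 1)) 0 =
      (L2apply p b)^[k] (stdBasis j) 0 +
        b (j + 1) * (L2apply p b)^[k] (stdBasis (j + 1 + p)) 0 := by
  rw [Function.iterate_succ_apply, L2apply_stdBasis_succ, L2apply_iterate_eq_pow, map_add,
    map_smul]
  rfl

lemma L2apply_iterate_stdBasis_of_lt {k j : ℕ} (h : k < j) :
    (L2apply p b)^[k] (stdBasis j) 0 = 0 := by
  induction k generalizing j with
  | zero => simp [stdBasis, h.ne]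
  | succ k ih =>
    obtain ⟨j, rfl⟩ : ∃ i, j = i + 1 := ⟨j - 1, by omega⟩
    rw [L2apply_iterate_succ_stdBasis_succ, ih (by omega), ih (by omega), mul_zero, add_zero]

lemma L2apply_iterate_stdBasis_self (j : ℕ) : (L2apply p b)^[j] (stdBasis j) 0 = 1 := by
  induction j with
  | zero => simp [stdBasis]
  | succ j ih =>
    rw [L2apply_iterate_succ_stdBasis_succ, ih, L2apply_iterate_stdBasis_of_lt p b (by omega),
      mul_zero, add_zero]

lemma L2apply_iterate_add_succ_stdBasis (j : ℕ) :
    (L2apply p b)^[j + p + 1] (stdBasis j) 0 = ∑ l ∈ Finset.range (j + 1), b l := by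
  induction j with
  | zero =>
    rw [zero_add, L2apply_iterate_succ_stdBasis_zero, L2apply_iterate_stdBasis_self]
    simp
  | succ j ih =>
    rw [show j + 1 + p + 1 = j + p + 1 + 1 by ring, L2apply_iterate_succ_stdBasis_succ, ih,
      show j + p + 1 = j + 1 + p by ring, L2apply_iterate_stdBasis_self,
      Finset.sum_range_succ _ (j + 1), mul_one]

end L2

theorem momL2_values_general (p : ℕ) (b : ℕ → ℂ) :
    ∀ n, 1 ≤ n → n ≤ p →
      momL2 p b (n - 1) n = 1 ∧ momL2 p b (n + p) n = ∑ l ∈ Finset.range n, b l := by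
  rintro n hn -
  obtain ⟨j, rfl⟩ : ∃ j, n = j + 1 := ⟨n - 1, by omega⟩
  refine ⟨L2apply_iterate_stdBasis_self p b j, ?_⟩
  rw [momL2, Nat.add_sub_cancel, add_right_comm]
  exact L2apply_iterate_add_succ_stdBasis p b j

/-- `S̃_{n-1}^n = 1` and `S̃_{n+p}^n = Σ_{l=0}^{n-1} b_l` for every `1 ≤ n ≤ p`. -/
theorem momL2_values (p : ℕ) (hp : 1 ≤ p) (b : ℕ → ℂ) (hb : ∀ i, b i ≠ 0) :
    ∀ n, 1 ≤ n → n ≤ p →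
      momL2 p b (n - 1) n = 1 ∧ momL2 p b (n + p) n = ∑ l ∈ Finset.range n, b l :=
  momL2_values_general p b
end
end

section
/- Let p ≥ 1 and let a_i : I → ℂ (i ∈ ℤ) be differentiable functions on an interval I satisfying the infinite Bogoyavlensky lattice a_i' = a_i(∏_{j=1}^p a_{i+j} − ∏_{j=1}^p a_{i−j}) for all i ∈ ℤ. Then the functions b_i := a_i a_{i+1} ⋯ a_{i+p−1} satisfy b_i' = b_i(Σ_{j=1}^p b_{i+j} − Σ_{j=1}^p b_{i−j}) for all i ∈ ℤ. -/
/-!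
The logarithmic derivative of `b_i = ∏_{k<p} a_{i+k}` is the sum of those of its factors,
`∑_{k<p} (∏_{j=1}^p a_{i+k+j} - ∏_{j=1}^p a_{i+k-j}) = ∑_{k<p} (b_{i+k+1} - b_{i+k-p})`,
and reindexing the two halves of this sum gives `∑_{j=1}^p b_{i+j} - ∑_{j=1}^p b_{i-j}`.
-/

open Finset

theorem HasDerivWithinAt.fun_finsetProd_of_eq_mul {𝕜 𝔸 ι : Type*} [NontriviallyNormedField 𝕜]
    [NormedCommRing 𝔸] [NormedAlgebra 𝕜 𝔸] {u : Finset ι} {f : ι → 𝕜 → 𝔸} {g : ι → 𝔸}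
    {s : Set 𝕜} {x : 𝕜} (hf : ∀ i ∈ u, HasDerivWithinAt (f i) (f i x * g i) s x) :
    HasDerivWithinAt (∏ i ∈ u, f i ·) ((∏ i ∈ u, f i x) * ∑ i ∈ u, g i) s x := by
  classical
  convert HasDerivWithinAt.fun_finsetProd hf using 1
  rw [mul_sum]
  refine sum_congr rfl fun i hi => ?_
  rw [smul_eq_mul, ← mul_assoc, prod_erase_mul _ _ hi]

namespace Finset

variable {M : Type*} [CommMonoid M]

theorem prod_Icc_int_add (f : ℤ → M) (m : ℤ) (p : ℕ) :
    ∏ j ∈ Icc 1 p, f (m + j) = ∏ j ∈ range p, f (m + j + 1) := by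
  rw [← Ico_add_one_right_eq_Icc, prod_Ico_eq_prod_range, add_tsub_cancel_right]
  refine prod_congr rfl fun j _ => ?_
  push_cast
  ring_nf

theorem prod_Icc_int_sub (f : ℤ → M) (m : ℤ) (p : ℕ) :
    ∏ j ∈ Icc 1 p, f (m - j) = ∏ j ∈ range p, f (m + j - p) := by
  rw [← Ico_add_one_right_eq_Icc, prod_Ico_eq_prod_range, add_tsub_cancel_right,
    ← prod_range_reflect (fun j : ℕ => f (m + j - p))]
  refine prod_congr rfl fun j hj => congrArg f ?_
  rw [mem_range] at hj
  omega

theorem sum_Icc_int_add {A : Type*} [AddCommMonoid A] (f : ℤ → A) (m : ℤ) (p : ℕ) :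
    ∑ j ∈ Icc 1 p, f (m + j) = ∑ j ∈ range p, f (m + j + 1) :=
  prod_Icc_int_add (M := Multiplicative A) f m p

theorem sum_Icc_int_sub {A : Type*} [AddCommMonoid A] (f : ℤ → A) (m : ℤ) (p : ℕ) :
    ∑ j ∈ Icc 1 p, f (m - j) = ∑ j ∈ range p, f (m + j - p) :=
  prod_Icc_int_sub (M := Multiplicative A) f m p

end Finset

theorem miura_transform_infinite_general (p : ℕ) (I : Set ℝ) (a : ℤ → ℝ → ℂ)
    (ha : ∀ i : ℤ, ∀ t ∈ I, HasDerivWithinAt (a i)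
      (a i t * (∏ j ∈ Finset.Icc 1 p, a (i + (j : ℤ)) t -
        ∏ j ∈ Finset.Icc 1 p, a (i - (j : ℤ)) t)) I t) :
    ∀ i : ℤ, ∀ t ∈ I,
      HasDerivWithinAt (fun s => ∏ j ∈ Finset.range p, a (i + (j : ℤ)) s)
        ((∏ j ∈ Finset.range p, a (i + (j : ℤ)) t) *
          ((∑ j ∈ Finset.Icc 1 p, ∏ j' ∈ Finset.range p, a (i + (j : ℤ) + (j' : ℤ)) t) -
            ∑ j ∈ Finset.Icc 1 p, ∏ j' ∈ Finset.range p, a (i - (j : ℤ) + (j' : ℤ)) t)) I t := by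
  intro i t ht
  set b : ℤ → ℂ := fun m => ∏ j ∈ range p, a (m + j) t
  refine (HasDerivWithinAt.fun_finsetProd_of_eq_mul (u := range p)
    fun k _ => ha (i + k) t ht).congr_deriv (congrArg _ ?_)
  rw [sum_Icc_int_add b, sum_Icc_int_sub b, ← sum_sub_distrib]
  refine sum_congr rfl fun k _ => ?_
  rw [prod_Icc_int_add (a · t), prod_Icc_int_sub (a · t)]
  congr 1 <;> exact prod_congr rfl fun j _ => by ring_nf

/-- Miura transformation: if the `a_i` solve the infinite Bogoyavlensky lattice
`a_i' = a_i (∏_{j=1}^p a_{i+j} − ∏_{j=1}^p a_{i−j})`, then the functions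
`b_i = a_i a_{i+1} ⋯ a_{i+p−1}` solve `b_i' = b_i (Σ_{j=1}^p b_{i+j} − Σ_{j=1}^p b_{i−j})`. -/
theorem miura_transform_infinite (p : ℕ) (hp : 1 ≤ p) (I : Set ℝ) (a : ℤ → ℝ → ℂ)
    (ha : ∀ i : ℤ, ∀ t ∈ I, HasDerivWithinAt (a i)
      (a i t * (∏ j ∈ Finset.Icc 1 p, a (i + (j : ℤ)) t -
        ∏ j ∈ Finset.Icc 1 p, a (i - (j : ℤ)) t)) I t) :
    ∀ i : ℤ, ∀ t ∈ I,
      HasDerivWithinAt (fun s => ∏ j ∈ Finset.range p, a (i + (j : ℤ)) s)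
        ((∏ j ∈ Finset.range p, a (i + (j : ℤ)) t) *
          ((∑ j ∈ Finset.Icc 1 p, ∏ j' ∈ Finset.range p, a (i + (j : ℤ) + (j' : ℤ)) t) -
            ∑ j ∈ Finset.Icc 1 p, ∏ j' ∈ Finset.range p, a (i - (j : ℤ) + (j' : ℤ)) t)) I t :=
  miura_transform_infinite_general p I a ha
end

section
/- Let p ≥ 2, let b_i : I → ℂ (i ∈ ℤ) be differentiable functions on an interval I satisfying b_i' = b_i(Σ_{j=1}^p b_{i+j} − Σ_{j=1}^p b_{i−j}) for all i ∈ ℤ, and fix I₀ ∈ ℤ. Suppose a_{I₀}, …, a_{I₀+p−2} : I → ℂ are differentiable, nowhere vanishing, and satisfy a_i' = a_i(b_{i+1} − b_{i−p}) for i = I₀, …, I₀+p−2. Define a_{I₀+p−1} := b_{I₀}/(a_{I₀} a_{I₀+1} ⋯ a_{I₀+p−2}). Then a_{I₀+p−1} is differentiable and satisfies a_{I₀+p−1}' = a_{I₀+p−1}(b_{I₀+p} − b_{I₀−1}). -/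
/-!
Logarithmic derivatives turn the claim into an identity of sums: the logarithmic derivative of
`b_{I₀} / (a_{I₀} ⋯ a_{I₀+p-2})` is `Σ_{j=1}^p b_{I₀+j} - Σ_{j=1}^p b_{I₀-j}` minus
`Σ_{j<p-1} (b_{I₀+j+1} - b_{I₀+j-p})`, and the second sum cancels every term of the first
except `b_{I₀+p} - b_{I₀-1}`.
-/

open Finset

section LogDeriv

variable {𝕜 : Type*} [NontriviallyNormedField 𝕜] {s : Set 𝕜} {x : 𝕜}

theorem HasDerivWithinAt.finsetProd_of_logDeriv {ι 𝔸 : Type*} [NormedCommRing 𝔸]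
    [NormedAlgebra 𝕜 𝔸] {u : Finset ι} {f : ι → 𝕜 → 𝔸} {g : ι → 𝔸}
    (hf : ∀ i ∈ u, HasDerivWithinAt (f i) (f i x * g i) s x) :
    HasDerivWithinAt (fun y => ∏ i ∈ u, f i y) ((∏ i ∈ u, f i x) * ∑ i ∈ u, g i) s x := by
  classical
  convert HasDerivWithinAt.fun_finsetProd hf using 1
  rw [mul_sum]
  refine sum_congr rfl fun i hi => ?_
  rw [smul_eq_mul, ← mul_assoc, prod_erase_mul _ _ hi]

theorem HasDerivWithinAt.div_of_logDeriv {𝕜' : Type*} [NontriviallyNormedField 𝕜']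
    [NormedAlgebra 𝕜 𝕜'] {c d : 𝕜 → 𝕜'} {γ δ : 𝕜'}
    (hc : HasDerivWithinAt c (c x * γ) s x) (hd : HasDerivWithinAt d (d x * δ) s x)
    (hx : d x ≠ 0) :
    HasDerivWithinAt (fun y => c y / d y) (c x / d x * (γ - δ)) s x := by
  convert hc.fun_div hd hx using 1
  field_simp

end LogDeriv

theorem Finset.sum_Icc_one_eq_sum_range {M : Type*} [AddCommMonoid M] (f : ℕ → M) (n : ℕ) :
    ∑ j ∈ Icc 1 n, f j = ∑ j ∈ range n, f (j + 1) := by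
  induction n with
  | zero => rfl
  | succ n ih => rw [sum_Icc_succ_top (by omega), ih, sum_range_succ]

theorem sum_Icc_add_sub_sum_Icc_sub {G : Type*} [AddCommGroup G] (c : ℤ → G) (i : ℤ) {p : ℕ}
    (hp : 1 ≤ p) :
    ∑ j ∈ Icc 1 p, c (i + j) - ∑ j ∈ Icc 1 p, c (i - j) =
      ∑ j ∈ range (p - 1), (c (i + j + 1) - c (i + j - p)) + (c (i + p) - c (i - 1)) := by
  obtain ⟨n, rfl⟩ : ∃ n, p = n + 1 := ⟨p - 1, by omega⟩
  have hback :
      ∑ j ∈ range n, c (i - (j + 1 + 1 : ℕ)) = ∑ j ∈ range n, c (i + j - (n + 1 : ℕ)) := by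
    rw [← sum_range_reflect]
    refine sum_congr rfl fun j hj => ?_
    have := mem_range.1 hj
    congr 1
    omega
  rw [sum_Icc_one_eq_sum_range, sum_Icc_one_eq_sum_range, sum_range_succ, sum_range_succ',
    Nat.add_sub_cancel, sum_sub_distrib, ← hback]
  simp only [Nat.cast_add, Nat.cast_one, zero_add, add_assoc]
  abel

/-- Inverse Miura step: if the `b_i` solve the lattice
`b_i' = b_i (Σ_{j=1}^p b_{i+j} − Σ_{j=1}^p b_{i−j})` and `a_{I₀}, …, a_{I₀+p−2}` are
nowhere-vanishing solutions of `a_i' = a_i (b_{i+1} − b_{i−p})`, then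
`a_{I₀+p−1} := b_{I₀} / (a_{I₀} ⋯ a_{I₀+p−2})` is differentiable and satisfies
`a_{I₀+p−1}' = a_{I₀+p−1} (b_{I₀+p} − b_{I₀−1})`. -/
theorem inverse_miura_step (p : ℕ) (hp : 2 ≤ p) (I : Set ℝ) (b : ℤ → ℝ → ℂ)
    (hb : ∀ i : ℤ, ∀ t ∈ I, HasDerivWithinAt (b i)
      (b i t * (∑ j ∈ Finset.Icc 1 p, b (i + (j : ℤ)) t -
        ∑ j ∈ Finset.Icc 1 p, b (i - (j : ℤ)) t)) I t)
    (I₀ : ℤ) (a : ℤ → ℝ → ℂ)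
    (haDeriv : ∀ i : ℤ, I₀ ≤ i → i ≤ I₀ + (p : ℤ) - 2 → ∀ t ∈ I,
      HasDerivWithinAt (a i) (a i t * (b (i + 1) t - b (i - (p : ℤ)) t)) I t)
    (haNe : ∀ i : ℤ, I₀ ≤ i → i ≤ I₀ + (p : ℤ) - 2 → ∀ t ∈ I, a i t ≠ 0) :
    ∀ t ∈ I,
      HasDerivWithinAt (fun s => b I₀ s / ∏ j ∈ Finset.range (p - 1), a (I₀ + (j : ℤ)) s)
        ((b I₀ t / ∏ j ∈ Finset.range (p - 1), a (I₀ + (j : ℤ)) t) *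
          (b (I₀ + (p : ℤ)) t - b (I₀ - 1) t)) I t := by
  intro t ht
  have hmem {j : ℕ} (hj : j ∈ range (p - 1)) : I₀ ≤ I₀ + j ∧ I₀ + j ≤ I₀ + (p : ℤ) - 2 := by
    have := mem_range.1 hj
    omega
  have hprod := HasDerivWithinAt.finsetProd_of_logDeriv (u := range (p - 1)) fun j hj =>
    haDeriv (I₀ + j) (hmem hj).1 (hmem hj).2 t ht
  have hne : ∏ j ∈ range (p - 1), a (I₀ + (j : ℤ)) t ≠ 0 :=
    prod_ne_zero_iff.2 fun j hj => haNe (I₀ + j) (hmem hj).1 (hmem hj).2 t ht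
  refine ((hb I₀ t ht).div_of_logDeriv hprod hne).congr_deriv ?_
  rw [sum_Icc_add_sub_sum_Icc_sub (b · t) I₀ (by omega)]
  ring
end

section
/- Let p ≥ 2 and let b_i : [0,T) → ℂ (i ≥ 0, with the convention b_l ≡ 0 for l < 0) be differentiable functions with b_i(t) ≠ 0 for all i ≥ 0 and t, satisfying the semi-infinite lattice b_i' = b_i(Σ_{j=1}^p b_{i+j} − Σ_{j=1}^p b_{i−j}). Fix nonzero complex numbers a_0(0), …, a_{p−2}(0) and define a_i(t) = a_i(0)·exp(∫_0^t b_{i+1}(τ) dτ) for 0 ≤ i ≤ p−2, and recursively a_i(t) = b_{i−p+1}(t)/(a_{i−p+1}(t) ⋯ a_{i−1}(t)) for i ≥ p−1. Then each a_i is differentiable and nowhere vanishing, a_i a_{i+1} ⋯ a_{i+p−1} = b_i for all i ≥ 0, and (a_i)_{i≥0} satisfies the semi-infinite lattice a_i' = a_i(∏_{j=1}^p a_{i+j} − ∏_{j=1}^p a_{i−j}) (with the convention a_l ≡ 0 for l < 0). -/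
/-!
Since `a_i ⋯ a_{i+p-1} = b_i`, the products in the `a`-lattice are `b_{i+1}` and `b_{i-p}`, so the
claim is that `a_i` has logarithmic derivative `b_{i+1} - b_{i-p}`. For `i ≤ p - 2` this is the
exponential formula (and `b_{i-p} = 0`). For `i ≥ p - 1` it follows by strong induction from
`a_i = b_m / (a_m ⋯ a_{i-1})`, `m = i - p + 1`: logarithmic derivatives of quotients and products
subtract and add, and the `b`-lattice makes the resulting sums telescope.
-/

open Finset

namespace Finset

variable {M : Type*} [CommMonoid M]

@[to_additive]
theorem prod_Icc_int_add_eq_prod_range (f : ℤ → M) (i : ℤ) (p : ℕ) :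
    ∏ j ∈ Icc 1 p, f (i + j) = ∏ j ∈ range p, f (i + j + 1) := by
  rw [← Ico_add_one_right_eq_Icc, prod_Ico_eq_prod_range, Nat.add_sub_cancel]
  exact prod_congr rfl fun j _ => congr_arg f (by push_cast; ring)

@[to_additive]
theorem prod_Icc_int_sub_eq_prod_range (f : ℤ → M) (i : ℤ) (p : ℕ) :
    ∏ j ∈ Icc 1 p, f (i - j) = ∏ j ∈ range p, f (i + j - p) := by
  induction p with
  | zero => simp
  | succ p ih =>
    rw [prod_Icc_succ_top (by omega), ih, prod_range_succ']
    congr 1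
    · exact prod_congr rfl fun j _ => congr_arg f (by push_cast; ring)
    · exact congr_arg f (by push_cast; ring)

end Finset

theorem sum_Icc_sub_sum_Icc_sub_sum_range {G : Type*} [AddCommGroup G] (b : ℤ → G) (m : ℤ)
    {p : ℕ} (hp : 1 ≤ p) :
    (∑ j ∈ Icc 1 p, b (m + j) - ∑ j ∈ Icc 1 p, b (m - j)) -
        ∑ j ∈ range (p - 1), (b (m + j + 1) - b (m + j - p)) = b (m + p) - b (m - 1) := by
  obtain ⟨q, rfl⟩ := Nat.exists_eq_add_of_le' hp
  rw [sum_Icc_int_add_eq_sum_range, sum_Icc_int_sub_eq_sum_range, sum_range_succ, sum_range_succ,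
    sum_sub_distrib, Nat.add_sub_cancel]
  push_cast
  rw [show m + q - (q + 1) = m - 1 by ring, show m + q + 1 = m + (q + 1) by ring]
  abel

section LogDeriv

variable {𝕜 𝕜' : Type*} [NontriviallyNormedField 𝕜] [NontriviallyNormedField 𝕜']
  [NormedAlgebra 𝕜 𝕜'] {s : Set 𝕜} {t : 𝕜}

theorem HasDerivWithinAt.prod_range_mul_sum {f : ℕ → 𝕜 → 𝕜'} {g : ℕ → 𝕜'} {n : ℕ}
    (hf : ∀ j < n, HasDerivWithinAt (f j) (f j t * g j) s t) :
    HasDerivWithinAt (fun u => ∏ j ∈ range n, f j u)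
      ((∏ j ∈ range n, f j t) * ∑ j ∈ range n, g j) s t := by
  induction n with
  | zero => simpa using hasDerivWithinAt_const t s (1 : 𝕜')
  | succ n ih =>
    simp only [prod_range_succ, sum_range_succ]
    convert (ih fun j hj => hf j (by omega)).fun_mul (hf n n.lt_succ_self) using 1
    ring

theorem HasDerivWithinAt.div_mul_sub {f g : 𝕜 → 𝕜'} {f' g' : 𝕜'}
    (hf : HasDerivWithinAt f (f t * f') s t) (hg : HasDerivWithinAt g (g t * g') s t)
    (hg0 : g t ≠ 0) : HasDerivWithinAt (fun u => f u / g u) (f t / g t * (f' - g')) s t := by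
  convert hf.fun_div hg hg0 using 1
  field_simp

end LogDeriv

theorem hasDerivWithinAt_integral_Ico {E : Type*} [NormedAddCommGroup E] [NormedSpace ℝ E]
    [CompleteSpace E] {f : ℝ → E} {a b t : ℝ} (hf : ContinuousOn f (Set.Ico a b))
    (ht : t ∈ Set.Ico a b) :
    HasDerivWithinAt (fun u => ∫ x in a..u, f x) (f t) (Set.Ico a b) t := by
  obtain ⟨c, htc, hcb⟩ := exists_between ht.2
  have htc' : t ∈ Set.Icc a c := ⟨ht.1, htc.le⟩
  have : Fact (t ∈ Set.Icc a c) := ⟨htc'⟩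
  have hfc := hf.mono (Set.Icc_subset_Ico_right hcb)
  refine (intervalIntegral.integral_hasDerivWithinAt_right (s := Set.Icc a c) ?_
    (hfc.stronglyMeasurableAtFilter_nhdsWithin measurableSet_Icc t)
    (hfc t htc')).mono_of_mem_nhdsWithin ?_
  · refine (hfc.mono ?_).intervalIntegrable
    rw [Set.uIcc_of_le ht.1]
    exact Set.Icc_subset_Icc_right htc.le
  · exact mem_nhdsWithin.2 ⟨Set.Iio c, isOpen_Iio, htc, fun x hx => ⟨hx.2.1, hx.1.le⟩⟩

theorem hasDerivWithinAt_const_mul_cexp_integral_Ico {f g : ℝ → ℂ} {c : ℂ} {a b t : ℝ}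
    (hg : ContinuousOn g (Set.Ico a b))
    (hf : Set.EqOn f (fun u => c * Complex.exp (∫ x in a..u, g x)) (Set.Ico a b))
    (ht : t ∈ Set.Ico a b) : HasDerivWithinAt f (f t * g t) (Set.Ico a b) t := by
  refine (((hasDerivWithinAt_integral_Ico hg ht).cexp.const_mul c).congr hf (hf ht)).congr_deriv ?_
  rw [hf ht, mul_assoc]

section MiuraAlgebra

variable {K : Type*} [Field K] {p : ℕ} {a b : ℤ → K}

theorem miura_ne_zero (hlow : ∀ i, 0 ≤ i → i ≤ (p : ℤ) - 2 → a i ≠ 0)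
    (hb : ∀ i, 0 ≤ i → b i ≠ 0)
    (hrec : ∀ i, (p : ℤ) - 1 ≤ i →
      a i = b (i - p + 1) / ∏ j ∈ range (p - 1), a (i - p + 1 + j)) :
    ∀ i, 0 ≤ i → a i ≠ 0 := by
  intro i
  induction i using Int.strongRec (m := 0) with
  | lt i hi => intro h; omega
  | ge i _ ih =>
    intro hi
    rcases le_or_gt i (p - 2) with hlo | hhi
    · exact hlow i hi hlo
    rw [hrec i (by omega)]
    refine div_ne_zero (hb _ (by omega)) (prod_ne_zero_iff.2 fun j hj => ?_)
    have := mem_range.1 hj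
    exact ih _ (by omega) (by omega)

theorem miura_prod_range_eq (hp : 1 ≤ p) (ha : ∀ i, 0 ≤ i → a i ≠ 0)
    (hrec : ∀ i, (p : ℤ) - 1 ≤ i →
      a i = b (i - p + 1) / ∏ j ∈ range (p - 1), a (i - p + 1 + j))
    {i : ℤ} (hi : 0 ≤ i) : ∏ j ∈ range p, a (i + j) = b i := by
  obtain ⟨q, rfl⟩ := Nat.exists_eq_add_of_le' hp
  have hlast := hrec (i + q) (by push_cast; omega)
  rw [Nat.add_sub_cancel, show i + q - ↑(q + 1) + 1 = i by push_cast; ring] at hlast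
  rw [prod_range_succ, hlast, mul_div_cancel₀]
  exact prod_ne_zero_iff.2 fun j _ => ha _ (by omega)

theorem miura_prod_Icc_add (hprod : ∀ i, 0 ≤ i → ∏ j ∈ range p, a (i + j) = b i)
    {i : ℤ} (hi : 0 ≤ i) : ∏ j ∈ Icc 1 p, a (i + j) = b (i + 1) := by
  rw [prod_Icc_int_add_eq_prod_range, ← hprod (i + 1) (by omega)]
  exact prod_congr rfl fun j _ => congr_arg a (by ring)

theorem miura_prod_Icc_sub (hp : 1 ≤ p) (hprod : ∀ i, 0 ≤ i → ∏ j ∈ range p, a (i + j) = b i)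
    (haneg : ∀ l < 0, a l = 0) (hbneg : ∀ l < 0, b l = 0) (i : ℤ) :
    ∏ j ∈ Icc 1 p, a (i - j) = b (i - p) := by
  rcases le_or_gt 0 (i - p) with hi | hi
  · rw [prod_Icc_int_sub_eq_prod_range, ← hprod _ hi]
    exact prod_congr rfl fun j _ => congr_arg a (by ring)
  · rw [hbneg _ hi]
    exact prod_eq_zero (mem_Icc.2 ⟨hp, le_rfl⟩) (haneg _ hi)

end MiuraAlgebra

theorem miura_hasDerivWithinAt {𝕜 𝕜' : Type*} [NontriviallyNormedField 𝕜]
    [NontriviallyNormedField 𝕜'] [NormedAlgebra 𝕜 𝕜'] {s : Set 𝕜} {p : ℕ} {a b : ℤ → 𝕜 → 𝕜'}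
    (hp : 1 ≤ p) (hbneg : ∀ l < 0, ∀ t ∈ s, b l t = 0)
    (hbode : ∀ i, 0 ≤ i → ∀ t ∈ s, HasDerivWithinAt (b i)
      (b i t * (∑ j ∈ Icc 1 p, b (i + j) t - ∑ j ∈ Icc 1 p, b (i - j) t)) s t)
    (ha : ∀ i, 0 ≤ i → ∀ t ∈ s, a i t ≠ 0)
    (hlow : ∀ i, 0 ≤ i → i ≤ (p : ℤ) - 2 → ∀ t ∈ s,
      HasDerivWithinAt (a i) (a i t * b (i + 1) t) s t)
    (hrec : ∀ i, (p : ℤ) - 1 ≤ i → ∀ t ∈ s,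
      a i t = b (i - p + 1) t / ∏ j ∈ range (p - 1), a (i - p + 1 + j) t) :
    ∀ i, 0 ≤ i → ∀ t ∈ s,
      HasDerivWithinAt (a i) (a i t * (b (i + 1) t - b (i - p) t)) s t := by
  intro i
  induction i using Int.strongRec (m := 0) with
  | lt i hi => intro h; omega
  | ge i _ ih =>
    intro hi t ht
    rcases le_or_gt i (p - 2) with hlo | hhi
    · rw [hbneg (i - p) (by omega) t ht, sub_zero]
      exact hlow i hi hlo t ht
    set m := i - p + 1
    have hden := HasDerivWithinAt.prod_range_mul_sum (s := s) (t := t)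
      (f := fun j => a (m + j)) (g := fun j => b (m + j + 1) t - b (m + j - p) t) (n := p - 1)
      fun j hj => ih (m + j) (by omega) (by omega) t ht
    have hquot := (hbode m (by omega) t ht).div_mul_sub hden
      (prod_ne_zero_iff.2 fun j _ => ha _ (by omega) t ht)
    have hai : Set.EqOn (a i) (fun u => b m u / ∏ j ∈ range (p - 1), a (m + j) u) s :=
      fun u hu => hrec i (by omega) u hu
    refine (hquot.congr hai (hai ht)).congr_deriv ?_
    rw [hai ht, sum_Icc_sub_sum_Icc_sub_sum_range (b · t) m hp,
      show m + p = i + 1 by omega, show m - 1 = i - p by omega]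

theorem inverse_miura_semiinfinite_general (p : ℕ) (hp : 2 ≤ p) (T : ℝ)
    (b : ℤ → ℝ → ℂ)
    (hbneg : ∀ l : ℤ, l < 0 → ∀ t : ℝ, b l t = 0)
    (hbne : ∀ i : ℤ, 0 ≤ i → ∀ t ∈ Set.Ico (0 : ℝ) T, b i t ≠ 0)
    (hbode : ∀ i : ℤ, 0 ≤ i → ∀ t ∈ Set.Ico (0 : ℝ) T, HasDerivWithinAt (b i)
      (b i t * (∑ j ∈ Finset.Icc 1 p, b (i + (j : ℤ)) t -
        ∑ j ∈ Finset.Icc 1 p, b (i - (j : ℤ)) t)) (Set.Ico (0 : ℝ) T) t)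
    (α : ℤ → ℂ) (hα : ∀ i : ℤ, 0 ≤ i → i ≤ (p : ℤ) - 2 → α i ≠ 0)
    (a : ℤ → ℝ → ℂ)
    (haneg : ∀ l : ℤ, l < 0 → ∀ t : ℝ, a l t = 0)
    (hadef1 : ∀ i : ℤ, 0 ≤ i → i ≤ (p : ℤ) - 2 → ∀ t ∈ Set.Ico (0 : ℝ) T,
      a i t = α i * Complex.exp (∫ τ in (0 : ℝ)..t, b (i + 1) τ))
    (hadef2 : ∀ i : ℤ, (p : ℤ) - 1 ≤ i → ∀ t ∈ Set.Ico (0 : ℝ) T,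
      a i t = b (i - (p : ℤ) + 1) t /
        ∏ j ∈ Finset.range (p - 1), a (i - (p : ℤ) + 1 + (j : ℤ)) t) :
    ∀ i : ℤ, 0 ≤ i →
      (∀ t ∈ Set.Ico (0 : ℝ) T, a i t ≠ 0) ∧
      (∀ t ∈ Set.Ico (0 : ℝ) T, ∏ j ∈ Finset.range p, a (i + (j : ℤ)) t = b i t) ∧
      (∀ t ∈ Set.Ico (0 : ℝ) T, HasDerivWithinAt (a i)
        (a i t * (∏ j ∈ Finset.Icc 1 p, a (i + (j : ℤ)) t -
          ∏ j ∈ Finset.Icc 1 p, a (i - (j : ℤ)) t)) (Set.Ico (0 : ℝ) T) t) := by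
  have hp1 : 1 ≤ p := by omega
  have hane (t : ℝ) (ht : t ∈ Set.Ico 0 T) : ∀ i, 0 ≤ i → a i t ≠ 0 :=
    miura_ne_zero
      (fun i hi hi' => by
        rw [hadef1 i hi hi' t ht]
        exact mul_ne_zero (hα i hi hi') (Complex.exp_ne_zero _))
      (fun i hi => hbne i hi t ht) (fun i hi => hadef2 i hi t ht)
  have hprod (t : ℝ) (ht : t ∈ Set.Ico 0 T) : ∀ i, 0 ≤ i → ∏ j ∈ range p, a (i + j) t = b i t :=
    fun _ => miura_prod_range_eq (b := (b · t)) hp1 (hane t ht) (fun i hi => hadef2 i hi t ht)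
  have hder := miura_hasDerivWithinAt hp1 (fun l hl t _ => hbneg l hl t) hbode
    (fun i hi t ht => hane t ht i hi)
    (fun i hi hi' _ ht => hasDerivWithinAt_const_mul_cexp_integral_Ico
      (fun u hu => (hbode (i + 1) (by omega) u hu).continuousWithinAt) (hadef1 i hi hi') ht)
    hadef2
  intro i hi
  refine ⟨fun t ht => hane t ht i hi, fun t ht => hprod t ht i hi, fun t ht => ?_⟩
  rw [miura_prod_Icc_add (a := (a · t)) (hprod t ht) hi,
    miura_prod_Icc_sub (a := (a · t)) hp1 (hprod t ht) (fun l hl => haneg l hl t)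
      (fun l hl => hbneg l hl t)]
  exact hder i hi t ht

/-- Inverse Miura transformation for the semi-infinite lattices: if the `b_i` solve the
semi-infinite lattice `b_i' = b_i (Σ_{j=1}^p b_{i+j} − Σ_{j=1}^p b_{i−j})` on `[0,T)`
(with `b_l ≡ 0` for `l < 0`), and `a_i` is defined by
`a_i(t) = a_i(0) exp(∫_0^t b_{i+1})` for `0 ≤ i ≤ p−2` and recursively
`a_i(t) = b_{i−p+1}(t) / (a_{i−p+1}(t) ⋯ a_{i−1}(t))` for `i ≥ p−1`, then each `a_i`
(for `i ≥ 0`) is differentiable and nowhere vanishing, `a_i a_{i+1} ⋯ a_{i+p−1} = b_i`,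
and the `a_i` solve the semi-infinite lattice
`a_i' = a_i (∏_{j=1}^p a_{i+j} − ∏_{j=1}^p a_{i−j})` (with `a_l ≡ 0` for `l < 0`). -/
theorem inverse_miura_semiinfinite (p : ℕ) (hp : 2 ≤ p) (T : ℝ) (hT : 0 < T)
    (b : ℤ → ℝ → ℂ)
    (hbneg : ∀ l : ℤ, l < 0 → ∀ t : ℝ, b l t = 0)
    (hbne : ∀ i : ℤ, 0 ≤ i → ∀ t ∈ Set.Ico (0 : ℝ) T, b i t ≠ 0)
    (hbode : ∀ i : ℤ, 0 ≤ i → ∀ t ∈ Set.Ico (0 : ℝ) T, HasDerivWithinAt (b i)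
      (b i t * (∑ j ∈ Finset.Icc 1 p, b (i + (j : ℤ)) t -
        ∑ j ∈ Finset.Icc 1 p, b (i - (j : ℤ)) t)) (Set.Ico (0 : ℝ) T) t)
    (α : ℤ → ℂ) (hα : ∀ i : ℤ, 0 ≤ i → i ≤ (p : ℤ) - 2 → α i ≠ 0)
    (a : ℤ → ℝ → ℂ)
    (haneg : ∀ l : ℤ, l < 0 → ∀ t : ℝ, a l t = 0)
    (hadef1 : ∀ i : ℤ, 0 ≤ i → i ≤ (p : ℤ) - 2 → ∀ t ∈ Set.Ico (0 : ℝ) T,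
      a i t = α i * Complex.exp (∫ τ in (0 : ℝ)..t, b (i + 1) τ))
    (hadef2 : ∀ i : ℤ, (p : ℤ) - 1 ≤ i → ∀ t ∈ Set.Ico (0 : ℝ) T,
      a i t = b (i - (p : ℤ) + 1) t /
        ∏ j ∈ Finset.range (p - 1), a (i - (p : ℤ) + 1 + (j : ℤ)) t) :
    ∀ i : ℤ, 0 ≤ i →
      (∀ t ∈ Set.Ico (0 : ℝ) T, a i t ≠ 0) ∧
      (∀ t ∈ Set.Ico (0 : ℝ) T, ∏ j ∈ Finset.range p, a (i + (j : ℤ)) t = b i t) ∧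
      (∀ t ∈ Set.Ico (0 : ℝ) T, HasDerivWithinAt (a i)
        (a i t * (∏ j ∈ Finset.Icc 1 p, a (i + (j : ℤ)) t -
          ∏ j ∈ Finset.Icc 1 p, a (i - (j : ℤ)) t)) (Set.Ico (0 : ℝ) T) t) :=
  inverse_miura_semiinfinite_general p hp T b hbneg hbne hbode α hα a haneg hadef1 hadef2
end

section
/- Let p ≥ 1 and let (a_i)_{i≥0} be differentiable functions a_i : [0,T) → ℂ with a_i(t) ≠ 0 for all i,t, satisfying the semi-infinite lattice a_i' = a_i(∏_{j=1}^p a_{i+j} − ∏_{j=1}^p a_{i−j}) (with a_l ≡ 0 for l < 0). Let S_k^m(t) denote the moments of the matrix L1(t) built from (a_i(t)). Then for all k ≥ 0 and 1 ≤ m ≤ p one has the evolution equation (S_k^m)'(t) = S_{k+p+1}^m(t) − S_{p+1}^1(t)·S_k^m(t) for all t ∈ [0,T). -/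
open scoped BigOperators

noncomputable section

/-!
The lattice is the Lax equation `L' = [L, N]`, where `N` is the part of `L^{p+1}` strictly below
the diagonal: `N e_i = a_i ⋯ a_{i+p} e_{i+p+1}`. For `v_k = L^k e₀`, the product rule and
induction on `k` give `v_k' = (L^{p+1} - N - S_{p+1}^1) v_k`, the base case being
`L^{p+1} e₀ = S_{p+1}^1 e₀ + N e₀`. As `N` shifts indices up by `p + 1`, it does not reach the
components `m - 1 < p` that carry the moments.
-/

def weightedShift (b : ℕ → ℂ) : Module.End ℂ (ℕ → ℂ) where
  toFun v
    | 0 => 0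
    | j + 1 => b j * v j
  map_add' u v := by funext j; cases j <;> simp [mul_add]
  map_smul' c v := by funext j; cases j <;> simp [mul_left_comm]

@[simp] lemma weightedShift_zero (b v : ℕ → ℂ) : weightedShift b v 0 = 0 := rfl

@[simp] lemma weightedShift_succ (b v : ℕ → ℂ) (j : ℕ) :
    weightedShift b v (j + 1) = b j * v j := rfl

section

variable (p : ℕ) (a : ℕ → ℂ)

lemma L1apply_zero (v : ℕ → ℂ) : L1apply p a v 0 = v p := by
  simp [L1apply, L1entry, Finset.sum_ite_eq']

lemma L1apply_succ (v : ℕ → ℂ) (j : ℕ) :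
    L1apply p a v (j + 1) = v (j + 1 + p) + a j * v j := by
  have hsummand : ∀ k, L1entry p a (j + 1) k * v k =
      (if k = j + 1 + p then v k else 0) + (if k = j then a k * v k else 0) := by
    intro k
    by_cases hk : k = j + 1 + p
    · simp [L1entry, hk, show j + 1 + p ≠ j by omega]
    · by_cases hkj : k = j
      · simp [L1entry, hkj, show j ≠ j + 1 + p by omega]
      · simp [L1entry, hk, hkj, show j ≠ k by omega]
  simp only [L1apply, hsummand, Finset.sum_add_distrib, Finset.sum_ite_eq', Finset.mem_range]
  rw [if_pos (by omega), if_pos (by omega)]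

def L1End : Module.End ℂ (ℕ → ℂ) where
  toFun := L1apply p a
  map_add' u v := by funext i; simp [L1apply, mul_add, Finset.sum_add_distrib]
  map_smul' c v := by funext i; simp [L1apply, Finset.mul_sum, mul_left_comm]

lemma L1End_apply (v : ℕ → ℂ) : L1End p a v = L1apply p a v := rfl

lemma momL1_eq (k m : ℕ) :
    momL1 p a k m = (L1End p a ^ k) (stdBasis 0) (m - 1) := by
  rw [Module.End.pow_apply]; rfl

def bandProd (i : ℕ) : ℂ := ∏ l ∈ Finset.range (p + 1), a (i + l)

lemma mul_bandProd_succ (i : ℕ) :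
    a i * bandProd p a (i + 1) = bandProd p a i * a (i + p + 1) := by
  have hshift : bandProd p a (i + 1) = ∏ l ∈ Finset.range (p + 1), a (i + (l + 1)) :=
    Finset.prod_congr rfl fun l _ => by rw [Nat.add_right_comm, add_assoc]
  have hfront := Finset.prod_range_succ' (fun l => a (i + l)) (p + 1)
  have hback := Finset.prod_range_succ (fun l => a (i + l)) (p + 1)
  rw [add_zero] at hfront
  rw [hshift, bandProd, mul_comm, ← hfront, hback, add_assoc]

-- the part of `L^{p+1}` strictly below the diagonal
def lowerBand : Module.End ℂ (ℕ → ℂ) where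
  toFun v j := if p + 1 ≤ j then bandProd p a (j - (p + 1)) * v (j - (p + 1)) else 0
  map_add' u v := by funext j; simp only [Pi.add_apply]; split_ifs <;> ring
  map_smul' c v := by
    funext j; simp only [Pi.smul_apply, smul_eq_mul, RingHom.id_apply]; split_ifs <;> ring

lemma lowerBand_of_lt (v : ℕ → ℂ) {j : ℕ} (hj : j < p + 1) :
    lowerBand p a v j = 0 :=
  if_neg (Nat.not_le.mpr hj)

lemma lowerBand_of_eq_add (v : ℕ → ℂ) {i j : ℕ} (hj : j = i + (p + 1)) :
    lowerBand p a v j = bandProd p a i * v i := by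
  subst hj
  exact (if_pos (Nat.le_add_left _ _)).trans (by rw [Nat.add_sub_cancel])

-- `a_i'` from the lattice, reindexed over `ℕ` using `a_l = 0` for `l < 0`
def bogoyavlenskyVelocity (i : ℕ) : ℂ :=
  bandProd p a i - if p ≤ i then bandProd p a (i - p) else 0

theorem weightedShift_bogoyavlenskyVelocity :
    weightedShift (bogoyavlenskyVelocity p a) =
      L1End p a * lowerBand p a - lowerBand p a * L1End p a := by
  ext v j
  simp only [LinearMap.sub_apply, Module.End.mul_apply, L1End_apply, Pi.sub_apply]
  rcases j with _ | j
  · rw [weightedShift_zero, L1apply_zero, lowerBand_of_lt p a _ (Nat.lt_succ_self p),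
      lowerBand_of_lt p a _ (Nat.succ_pos p), sub_zero]
  rw [weightedShift_succ, L1apply_succ, lowerBand_of_eq_add p a v (i := j) (by omega),
    bogoyavlenskyVelocity]
  rcases Nat.lt_or_ge j p with hj | hj
  · rw [lowerBand_of_lt p a _ (by omega : j < p + 1), lowerBand_of_lt p a _ (by omega),
      if_neg (by omega)]
    ring
  obtain ⟨i, rfl⟩ := Nat.exists_eq_add_of_le' hj
  rw [if_pos hj, Nat.add_sub_cancel,
    lowerBand_of_eq_add p a (L1apply p a v) (i := i) (j := i + p + 1) (by omega)]
  rcases i with _ | i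
  · rw [lowerBand_of_lt p a v (by omega), L1apply_zero, zero_add]
    ring
  · rw [lowerBand_of_eq_add p a v (i := i) (j := i + 1 + p) (by omega), L1apply_succ,
      Nat.add_right_comm i 1 p]
    linear_combination v i * mul_bandProd_succ p a i

lemma L1apply_stdBasis_of_lt {j : ℕ} (hj : j < p) :
    L1apply p a (stdBasis j) = a j • stdBasis (j + 1) := by
  funext i
  rcases i with _ | i
  · simp [L1apply_zero, stdBasis, hj.ne']
  · have hne : i + 1 + p ≠ j := by omega
    by_cases hij : i = j
    · subst hij; simp [L1apply_succ, stdBasis, hne]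
    · simp [L1apply_succ, stdBasis, hij, hne]

lemma L1apply_stdBasis_self :
    L1apply p a (stdBasis p) = stdBasis 0 + a p • stdBasis (p + 1) := by
  funext i
  rcases i with _ | i
  · simp [L1apply_zero, stdBasis]
  · by_cases hip : i = p <;> simp [L1apply_succ, stdBasis, hip]

lemma L1End_pow_stdBasis_zero_of_le {k : ℕ} (hk : k ≤ p) :
    (L1End p a ^ k) (stdBasis 0) = (∏ i ∈ Finset.range k, a i) • stdBasis k := by
  induction k with
  | zero => simp
  | succ k ih =>
    rw [pow_succ', Module.End.mul_apply, ih (by omega), map_smul, L1End_apply,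
      L1apply_stdBasis_of_lt p a (by omega), smul_smul, Finset.prod_range_succ]

lemma lowerBand_stdBasis (i : ℕ) :
    lowerBand p a (stdBasis i) = bandProd p a i • stdBasis (i + (p + 1)) := by
  funext j
  by_cases hj : j = i + (p + 1)
  · rw [lowerBand_of_eq_add p a _ hj]
    simp [stdBasis, hj]
  · by_cases hle : p + 1 ≤ j
    · simp [lowerBand, stdBasis, hj, show j - (p + 1) ≠ i by omega]
    · simp [lowerBand_of_lt p a _ (Nat.lt_of_not_le hle), stdBasis, hj]

lemma L1End_pow_succ_stdBasis_zero :
    (L1End p a ^ (p + 1)) (stdBasis 0) =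
      momL1 p a (p + 1) 1 • stdBasis 0 + lowerBand p a (stdBasis 0) := by
  have hpow : (L1End p a ^ (p + 1)) (stdBasis 0) =
      (∏ i ∈ Finset.range p, a i) • (stdBasis 0 + a p • stdBasis (p + 1)) := by
    rw [pow_succ', Module.End.mul_apply, L1End_pow_stdBasis_zero_of_le p a le_rfl, map_smul,
      L1End_apply, L1apply_stdBasis_self]
  have hmom : momL1 p a (p + 1) 1 = ∏ i ∈ Finset.range p, a i := by
    simp [momL1_eq, hpow, stdBasis]
  rw [hpow, hmom, lowerBand_stdBasis, bandProd, Finset.prod_range_succ, zero_add, smul_add,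
    smul_smul]
  simp only [zero_add]

end

lemma hasDerivWithinAt_L1apply (p : ℕ) {a : ℕ → ℝ → ℂ} {da : ℕ → ℂ} {v : ℝ → ℕ → ℂ}
    {dv : ℕ → ℂ} {s : Set ℝ} {t : ℝ} (ha : ∀ n, HasDerivWithinAt (a n) (da n) s t)
    (hv : ∀ j, HasDerivWithinAt (fun τ => v τ j) (dv j) s t) (j : ℕ) :
    HasDerivWithinAt (fun τ => L1apply p (fun n => a n τ) (v τ) j)
      (L1apply p (fun n => a n t) dv j + weightedShift da (v t) j) s t := by
  rcases j with _ | j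
  · simpa only [L1apply_zero, weightedShift_zero, add_zero] using hv p
  · simp only [L1apply_succ, weightedShift_succ]
    exact ((hv (j + 1 + p)).add ((ha j).mul (hv j))).congr_deriv (by ring)

theorem hasDerivWithinAt_L1End_pow_stdBasis_zero (p : ℕ) {a : ℕ → ℝ → ℂ} {s : Set ℝ} {t : ℝ}
    (ha : ∀ n, HasDerivWithinAt (a n) (bogoyavlenskyVelocity p (fun n => a n t) n) s t)
    (k j : ℕ) :
    HasDerivWithinAt (fun τ => (L1End p (fun n => a n τ) ^ k) (stdBasis 0) j)
      ((L1End p (fun n => a n t) ^ (p + 1) - lowerBand p (fun n => a n t) -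
        momL1 p (fun n => a n t) (p + 1) 1 • 1) ((L1End p (fun n => a n t) ^ k) (stdBasis 0)) j)
      s t := by
  have hbase := L1End_pow_succ_stdBasis_zero p (fun n => a n t)
  have hLax := weightedShift_bogoyavlenskyVelocity p (fun n => a n t)
  set L := L1End p (fun n => a n t)
  set N := lowerBand p (fun n => a n t)
  set c := momL1 p (fun n => a n t) (p + 1) 1
  induction k generalizing j with
  | zero =>
    have hM : (L ^ (p + 1) - N - c • 1) (stdBasis 0) = 0 := by
      rw [LinearMap.sub_apply, LinearMap.sub_apply, hbase, LinearMap.smul_apply,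
        Module.End.one_apply, add_sub_cancel_right, sub_self]
    simpa [hM] using hasDerivWithinAt_const t s (stdBasis 0 j)
  | succ k ih =>
    -- product rule: `(L v_k)' = L' v_k + L v_k'`, with `L' = [L, N]`
    have hcomm : L * (L ^ (p + 1) - N - c • 1) + (L * N - N * L) =
        (L ^ (p + 1) - N - c • 1) * L := by
      simp only [mul_sub, sub_mul, mul_smul_comm, smul_mul_assoc, mul_one, one_mul,
        ← pow_succ, ← pow_succ']
      abel
    simp only [pow_succ' _ k, Module.End.mul_apply, L1End_apply]
    convert hasDerivWithinAt_L1apply p ha ih j using 1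
    rw [hLax, ← Module.End.mul_apply _ L, ← hcomm]
    rfl

lemma mul_prod_Icc_add_eq_bandProd (a : ℤ → ℂ) (p i : ℕ) :
    a i * ∏ j ∈ Finset.Icc 1 p, a (i + (j : ℤ)) = bandProd p (fun n : ℕ => a n) i := by
  rw [← Finset.Ico_add_one_right_eq_Icc, Finset.prod_Ico_eq_prod_range, bandProd,
    Finset.prod_range_succ', Nat.add_sub_cancel, mul_comm]
  push_cast
  simp only [add_zero, add_comm (1 : ℤ)]

lemma mul_prod_Icc_sub_eq (a : ℤ → ℂ) (ha : ∀ l < 0, a l = 0) (p i : ℕ) :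
    a i * ∏ j ∈ Finset.Icc 1 p, a (i - (j : ℤ)) =
      if p ≤ i then bandProd p (fun n : ℕ => a n) (i - p) else 0 := by
  split_ifs with hpi
  · obtain ⟨m, rfl⟩ := Nat.exists_eq_add_of_le' hpi
    have hreflect : ∏ j ∈ Finset.Icc 1 p, a ((m + p : ℕ) - (j : ℤ)) =
        ∏ l ∈ Finset.range p, a (m + l : ℕ) := by
      rw [← Finset.Ico_add_one_right_eq_Icc, Finset.prod_Ico_eq_prod_range, Nat.add_sub_cancel,
        ← Finset.prod_range_reflect]
      refine Finset.prod_congr rfl fun l hl => congrArg a ?_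
      have := Finset.mem_range.mp hl
      omega
    rw [hreflect, Nat.add_sub_cancel, bandProd, Finset.prod_range_succ, mul_comm]
  · refine mul_eq_zero_of_right _ (Finset.prod_eq_zero (i := p) ?_ (ha _ (by omega)))
    simp only [Finset.mem_Icc]
    omega

lemma lattice_velocity_eq_bogoyavlenskyVelocity (a : ℤ → ℂ) (ha : ∀ l < 0, a l = 0)
    (p i : ℕ) :
    a i * (∏ j ∈ Finset.Icc 1 p, a (i + (j : ℤ)) - ∏ j ∈ Finset.Icc 1 p, a (i - (j : ℤ))) =
      bogoyavlenskyVelocity p (fun n : ℕ => a n) i := by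
  rw [mul_sub, mul_prod_Icc_add_eq_bandProd, mul_prod_Icc_sub_eq a ha, bogoyavlenskyVelocity]

theorem momL1_evolution_general (p : ℕ) (T : ℝ)
    (a : ℤ → ℝ → ℂ)
    (haneg : ∀ l : ℤ, l < 0 → ∀ t : ℝ, a l t = 0)
    (haode : ∀ i : ℤ, 0 ≤ i → ∀ t ∈ Set.Ico (0 : ℝ) T, HasDerivWithinAt (a i)
      (a i t * (∏ j ∈ Finset.Icc 1 p, a (i + (j : ℤ)) t -
        ∏ j ∈ Finset.Icc 1 p, a (i - (j : ℤ)) t)) (Set.Ico (0 : ℝ) T) t) :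
    ∀ k m : ℕ, 1 ≤ m → m ≤ p → ∀ t ∈ Set.Ico (0 : ℝ) T,
      HasDerivWithinAt (fun s => momL1 p (fun n : ℕ => a (n : ℤ) s) k m)
        (momL1 p (fun n : ℕ => a (n : ℤ) t) (k + p + 1) m -
          momL1 p (fun n : ℕ => a (n : ℤ) t) (p + 1) 1 *
            momL1 p (fun n : ℕ => a (n : ℤ) t) k m)
        (Set.Ico (0 : ℝ) T) t := by
  intro k m hm1 hmp t ht
  have hvel : ∀ n : ℕ, HasDerivWithinAt (fun s => a n s)
      (bogoyavlenskyVelocity p (fun n : ℕ => a n t) n) (Set.Ico 0 T) t := fun n => by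
    rw [← lattice_velocity_eq_bogoyavlenskyVelocity (a · t) (fun l hl => haneg l hl t)]
    exact haode n n.cast_nonneg t ht
  have hflow := hasDerivWithinAt_L1End_pow_stdBasis_zero p hvel k (m - 1)
  simp only [momL1_eq]
  convert hflow using 1
  rw [LinearMap.sub_apply, LinearMap.sub_apply, Pi.sub_apply, Pi.sub_apply,
    lowerBand_of_lt _ _ _ (by omega), sub_zero, ← Module.End.mul_apply, ← pow_add,
    add_comm (p + 1) k, ← add_assoc, momL1_eq]
  rfl

/-- Evolution of the moments of `L1(t)` under the semi-infinite Bogoyavlensky lattice: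
`(S_k^m)' = S_{k+p+1}^m − S_{p+1}^1 · S_k^m`. -/
theorem momL1_evolution (p : ℕ) (hp : 1 ≤ p) (T : ℝ) (hT : 0 < T)
    (a : ℤ → ℝ → ℂ)
    (haneg : ∀ l : ℤ, l < 0 → ∀ t : ℝ, a l t = 0)
    (hane : ∀ i : ℤ, 0 ≤ i → ∀ t ∈ Set.Ico (0 : ℝ) T, a i t ≠ 0)
    (haode : ∀ i : ℤ, 0 ≤ i → ∀ t ∈ Set.Ico (0 : ℝ) T, HasDerivWithinAt (a i)
      (a i t * (∏ j ∈ Finset.Icc 1 p, a (i + (j : ℤ)) t -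
        ∏ j ∈ Finset.Icc 1 p, a (i - (j : ℤ)) t)) (Set.Ico (0 : ℝ) T) t) :
    ∀ k m : ℕ, 1 ≤ m → m ≤ p → ∀ t ∈ Set.Ico (0 : ℝ) T,
      HasDerivWithinAt (fun s => momL1 p (fun n : ℕ => a (n : ℤ) s) k m)
        (momL1 p (fun n : ℕ => a (n : ℤ) t) (k + p + 1) m -
          momL1 p (fun n : ℕ => a (n : ℤ) t) (p + 1) 1 *
            momL1 p (fun n : ℕ => a (n : ℤ) t) k m)
        (Set.Ico (0 : ℝ) T) t :=
  momL1_evolution_general p T a haneg haode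
end
end

section
/- Let p ≥ 1 and let (b_i)_{i≥0} be differentiable functions b_i : [0,T) → ℂ with b_i(t) ≠ 0 for all i,t, satisfying the semi-infinite lattice b_i' = b_i(Σ_{j=1}^p b_{i+j} − Σ_{j=1}^p b_{i−j}) (with b_l ≡ 0 for l < 0). Let S̃_k^n(t) denote the moments of the matrix L2(t) built from (b_i(t)). Then for all k ≥ 0 and 1 ≤ n ≤ p one has the evolution equation (S̃_k^n)'(t) = S̃_{k+p+1}^n(t) − S̃_{p+n}^n(t)·S̃_k^n(t) for all t ∈ [0,T). -/
open scoped BigOperators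

noncomputable section

/-! Write `(L v)_i = v_{i+1} + b_{i-p} v_{i-p}` and let `M` be the diagonal-plus-upper part of
`L^{p+1}`, `(M v)_i = d_i v_i + v_{i+p+1}` with `d_i = b_i + b_{i-1} + ⋯ + b_{i-p}`. The lattice is
the Lax equation `L' = M L - L M`, so by telescoping `(L^k)' = M L^k - L^k M`. Evaluate at `e_{n-1}`
and take the `0`-th entry: row `0` of `M` is row `0` of `L^{p+1}`, which gives `S̃_{k+p+1}^n`, and
since `n ≤ p`, `e_{n-1}` is an eigenvector of `M` whose eigenvalue `d_{n-1}` is `S̃_{p+n}^n`. -/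

lemma Finset.sum_range_succ_eq_add_sum_Icc {M : Type*} [AddCommMonoid M] (f : ℕ → M) (n : ℕ) :
    ∑ j ∈ Finset.range (n + 1), f j = f 0 + ∑ j ∈ Finset.Icc 1 n, f j := by
  rw [Finset.range_eq_Ico, Finset.sum_eq_sum_Ico_succ_bot (Nat.succ_pos n)]
  rfl

namespace Bogoyavlensky

open Finset

section Algebra

variable {R : Type*} [CommRing R] (p : ℕ) (β : ℤ → R)

/-- `L2`, with `β` extended by zero to negative indices so that the truncated `i - p` matters
only where its coefficient vanishes. -/
def opL : Module.End R (ℕ → R) where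
  toFun v i := v (i + 1) + β (i - p) * v (i - p)
  map_add' u v := by funext i; simp only [Pi.add_apply]; ring
  map_smul' c v := by funext i; simp only [Pi.smul_apply, smul_eq_mul, RingHom.id_apply]; ring

@[simp]
lemma opL_apply (v : ℕ → R) (i : ℕ) : opL p β v i = v (i + 1) + β (i - p) * v (i - p) := rfl

def diagM (l : ℤ) : R := ∑ j ∈ range (p + 1), β (l - j)

def opM (v : ℕ → R) : ℕ → R := fun i => diagM p β i * v i + v (i + p + 1)

def latticeRHS (l : ℤ) : R := β l * (∑ j ∈ Icc 1 p, β (l + j) - ∑ j ∈ Icc 1 p, β (l - j))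

lemma diagM_succ (l : ℤ) : diagM p β (l + 1) = diagM p β l + β (l + 1) - β (l - p) := by
  have h := sum_range_succ' (fun j : ℕ => β (l + 1 - j)) p
  simp only [Nat.cast_add, Nat.cast_one, add_sub_add_right_eq_sub, Nat.cast_zero, sub_zero] at h
  rw [diagM, diagM, h, sum_range_succ]
  ring

lemma latticeRHS_eq (l : ℤ) :
    latticeRHS p β l = β l * (diagM p β (l + p) - diagM p β l) := by
  have hup : diagM p β (l + p) = β l + ∑ j ∈ Icc 1 p, β (l + j) := by
    calc diagM p β (l + p) = ∑ j ∈ range (p + 1), β (l + j) := by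
          rw [diagM, ← sum_range_reflect]
          refine sum_congr rfl fun j hj => congrArg β ?_
          have := mem_range.mp hj
          omega
      _ = β l + ∑ j ∈ Icc 1 p, β (l + j) := by
          rw [sum_range_succ_eq_add_sum_Icc (fun j : ℕ => β (l + j))]
          simp
  have hdown : diagM p β l = β l + ∑ j ∈ Icc 1 p, β (l - j) := by
    rw [diagM, sum_range_succ_eq_add_sum_Icc (fun j : ℕ => β (l - j))]
    simp
  rw [latticeRHS, hup, hdown]
  ring

lemma opM_opL (hβ : ∀ l < 0, β l = 0) (v : ℕ → R) (i : ℕ) :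
    opM p β (opL p β v) i = opL p β (opM p β v) i + latticeRHS p β (i - p) * v (i - p) := by
  have hL : opL p β v (i + p + 1) = v (i + p + 1 + 1) + β (i + 1) * v (i + 1) := by
    rw [opL_apply, show ((i + p + 1 : ℕ) : ℤ) - p = i + 1 by push_cast; ring,
      show i + p + 1 - p = i + 1 by omega]
  simp only [opM, hL, latticeRHS_eq, opL_apply, Nat.cast_add_one, diagM_succ]
  rcases le_or_gt p i with hpi | hip
  · obtain ⟨m, rfl⟩ := Nat.exists_eq_add_of_le' hpi
    simp only [Nat.add_sub_cancel, Nat.cast_add, add_sub_cancel_right,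
      show m + p + 1 + p + 1 = m + p + p + 1 + 1 by omega]
    ring
  · rw [hβ _ (by omega), show i + 1 + p + 1 = i + p + 1 + 1 by omega]
    ring

variable {p β}

lemma opL_pow_apply_eq_zero {a : ℕ} {v : ℕ → R} (hv : ∀ i < a, v i = 0) (j : ℕ) :
    ∀ i, i + j < a → (opL p β ^ j) v i = 0 := by
  induction j with
  | zero => exact hv
  | succ j ih =>
    intro i hi
    rw [pow_succ', Module.End.mul_apply, opL_apply, ih (i + 1) (by omega), ih (i - p) (by omega),
      mul_zero, add_zero]

lemma opL_pow_apply_sub {a : ℕ} {v : ℕ → R} (hv : ∀ i < a, v i = 0) {j : ℕ} (hj : j ≤ a) :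
    (opL p β ^ j) v (a - j) = v a := by
  induction j with
  | zero => rfl
  | succ j ih =>
    rw [pow_succ', Module.End.mul_apply, opL_apply, show a - (j + 1) + 1 = a - j by omega,
      ih (by omega), opL_pow_apply_eq_zero hv j _ (by omega), mul_zero, add_zero]

lemma opL_single_succ (m : ℕ) :
    opL p β (Pi.single (m + 1) 1) = Pi.single m 1 + β (m + 1) • Pi.single (m + 1 + p) 1 := by
  funext i
  obtain rfl | hi := eq_or_ne i (m + 1 + p)
  · simp [Pi.single_apply]
  · simp [Pi.single_apply, hi, show i - p ≠ m + 1 by omega]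

lemma opL_pow_single_apply (m : ℕ) :
    (opL p β ^ m) (Pi.single m 1) (p + 1) = ∑ j ∈ range m, β (j + 1) := by
  induction m with
  | zero => simp
  | succ m ih =>
    have hdiag : (opL p β ^ m) (Pi.single (m + 1 + p) 1) (p + 1) = 1 := by
      rw [show p + 1 = m + 1 + p - m by omega,
        opL_pow_apply_sub (fun i hi => Pi.single_eq_of_ne hi.ne _) (by omega), Pi.single_eq_same]
    rw [pow_succ, Module.End.mul_apply, opL_single_succ, map_add, map_smul, Pi.add_apply,
      Pi.smul_apply, ih, hdiag, sum_range_succ, smul_eq_mul, mul_one]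

lemma opL_pow_apply_zero (hβ : ∀ l < 0, β l = 0) {j : ℕ} (hj : j ≤ p) (w : ℕ → R) :
    (opL p β ^ j) w 0 = w j := by
  induction j generalizing w with
  | zero => rfl
  | succ j ih =>
    rw [pow_succ, Module.End.mul_apply, ih (by omega), opL_apply, hβ _ (by omega), zero_mul,
      add_zero]

lemma diagM_eq_sum_range (hβ : ∀ l < 0, β l = 0) {m : ℕ} (hm : m ≤ p) :
    diagM p β m = ∑ j ∈ range (m + 1), β j := by
  rw [diagM, ← sum_range_add_sum_Ico _ (by omega : m + 1 ≤ p + 1),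
    sum_eq_zero (s := Ico _ _) fun j hj => hβ _ (by have := mem_Ico.mp hj; omega), add_zero,
    ← sum_range_reflect]
  refine sum_congr rfl fun j hj => congrArg β ?_
  have := mem_range.mp hj
  omega

lemma opL_pow_succ_apply_zero (hβ : ∀ l < 0, β l = 0) (w : ℕ → R) :
    (opL p β ^ (p + 1)) w 0 = opM p β w 0 := by
  have hdiag : diagM p β 0 = β 0 := by simpa using diagM_eq_sum_range hβ (Nat.zero_le p)
  rw [pow_succ, Module.End.mul_apply, opL_pow_apply_zero hβ le_rfl, opL_apply, opM, Nat.cast_zero,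
    hdiag]
  simp [add_comm]

lemma opL_pow_add_single_apply_zero (hβ : ∀ l < 0, β l = 0) {m : ℕ} (hm : m < p) :
    (opL p β ^ (p + 1 + m)) (Pi.single m 1) 0 = diagM p β m := by
  rw [pow_add, Module.End.mul_apply, opL_pow_succ_apply_zero hβ, opM, zero_add,
    opL_pow_apply_zero hβ hm.le, opL_pow_single_apply, diagM_eq_sum_range hβ hm.le,
    diagM_eq_sum_range hβ (Nat.zero_le p), sum_range_succ' _ m]
  simp [add_comm]

lemma opM_single {m : ℕ} (hm : m ≤ p) :
    opM p β (Pi.single m 1) = diagM p β m • Pi.single m 1 := by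
  funext i
  by_cases hi : i = m
  · subst hi
    simp [opM, show i + p + 1 ≠ i by omega]
  · simp [opM, hi, show i + p + 1 ≠ m by omega]

end Algebra

section Derivative

variable {𝕜 𝔸 : Type*} [NontriviallyNormedField 𝕜] [NormedCommRing 𝔸] [NormedAlgebra 𝕜 𝔸]
  {p : ℕ} {b : ℤ → 𝕜 → 𝔸} {s : Set 𝕜} {t : 𝕜}

theorem hasDerivWithinAt_opL_pow_apply (hb : ∀ l < 0, b l t = 0)
    (hder : ∀ l, HasDerivWithinAt (b l) (latticeRHS p (b · t) l) s t) (e : ℕ → 𝔸) (k i : ℕ) :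
    HasDerivWithinAt (fun τ => (opL p (b · τ) ^ k) e i)
      (opM p (b · t) ((opL p (b · t) ^ k) e) i - (opL p (b · t) ^ k) (opM p (b · t) e) i) s t := by
  induction k generalizing i with
  | zero => simpa using hasDerivWithinAt_const t s (e i)
  | succ k ih =>
    simp only [pow_succ', Module.End.mul_apply, opL_apply]
    refine ((ih (i + 1)).add ((hder _).fun_mul (ih (i - p)))).congr_deriv ?_
    rw [opM_opL _ _ hb]
    simp only [opL_apply]
    ring

end Derivative

lemma stdBasis_eq_single (j : ℕ) : stdBasis j = Pi.single j 1 := by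
  funext i
  simp [stdBasis, Pi.single_apply]

lemma L2apply_eq_opL {p : ℕ} {β : ℤ → ℂ} (hβ : ∀ l < 0, β l = 0) :
    L2apply p (fun m : ℕ => β m) = opL p β := by
  funext v i
  have hentry : ∀ k, L2entry p (fun m : ℕ => β m) i k * v k =
      (if k = i + 1 then v k else 0) + if k + p = i then β k * v k else 0 := by
    intro k
    simp only [L2entry]
    split_ifs <;> first | omega | ring
  have hlow : ∑ k ∈ range (i + 2), (if k + p = i then β k * v k else 0) =
      β (i - p) * v (i - p) := by
    rcases le_or_gt p i with hpi | hip
    · rw [sum_eq_single (i - p) (fun k _ hk => if_neg (by omega))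
          (fun h => absurd (mem_range.mpr (by omega)) h), if_pos (by omega), Nat.cast_sub hpi]
    · rw [hβ _ (by omega), zero_mul]
      exact sum_eq_zero fun k _ => if_neg (by omega)
  simp only [L2apply, hentry, sum_add_distrib, sum_ite_eq', mem_range, hlow, opL_apply]
  simp

lemma momL2_eq {p : ℕ} {β : ℤ → ℂ} (hβ : ∀ l < 0, β l = 0) (k n : ℕ) :
    momL2 p (fun m : ℕ => β m) k n = (opL p β ^ k) (Pi.single (n - 1) 1) 0 := by
  rw [momL2, L2apply_eq_opL hβ, ← Module.End.coe_pow, stdBasis_eq_single]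

end Bogoyavlensky

open Bogoyavlensky in
theorem momL2_evolution_general (p : ℕ) (T : ℝ)
    (b : ℤ → ℝ → ℂ)
    (hbneg : ∀ l : ℤ, l < 0 → ∀ t : ℝ, b l t = 0)
    (hbode : ∀ i : ℤ, 0 ≤ i → ∀ t ∈ Set.Ico (0 : ℝ) T, HasDerivWithinAt (b i)
      (b i t * (∑ j ∈ Finset.Icc 1 p, b (i + (j : ℤ)) t -
        ∑ j ∈ Finset.Icc 1 p, b (i - (j : ℤ)) t)) (Set.Ico (0 : ℝ) T) t) :
    ∀ k n : ℕ, 1 ≤ n → n ≤ p → ∀ t ∈ Set.Ico (0 : ℝ) T,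
      HasDerivWithinAt (fun s => momL2 p (fun m : ℕ => b (m : ℤ) s) k n)
        (momL2 p (fun m : ℕ => b (m : ℤ) t) (k + p + 1) n -
          momL2 p (fun m : ℕ => b (m : ℤ) t) (p + n) n *
            momL2 p (fun m : ℕ => b (m : ℤ) t) k n)
        (Set.Ico (0 : ℝ) T) t := by
  intro k n hn1 hnp t ht
  have hmom : ∀ τ k, momL2 p (fun m : ℕ => b m τ) k n =
      (opL p (b · τ) ^ k) (Pi.single (n - 1) 1) 0 :=
    fun τ k => momL2_eq (fun l hl => hbneg l hl τ) k n
  have hder : ∀ l, HasDerivWithinAt (b l) (latticeRHS p (b · t) l) (Set.Ico 0 T) t := by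
    intro l
    rcases lt_or_ge l 0 with hl | hl
    · rw [show b l = fun _ => 0 from funext (hbneg l hl), latticeRHS, hbneg l hl t, zero_mul]
      exact hasDerivWithinAt_const _ _ _
    · exact hbode l hl t ht
  simp only [hmom]
  refine (hasDerivWithinAt_opL_pow_apply (hbneg · · t) hder _ k 0).congr_deriv ?_
  rw [opM_single (by omega), map_smul, Pi.smul_apply, smul_eq_mul,
    show p + n = p + 1 + (n - 1) by omega,
    opL_pow_add_single_apply_zero (hbneg · · t) (by omega),
    ← opL_pow_succ_apply_zero (hbneg · · t),
    ← Module.End.mul_apply, ← pow_add, add_comm (p + 1), ← add_assoc]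

/-- Evolution of the moments of `L2(t)` under the semi-infinite Bogoyavlensky lattice:
`(S̃_k^n)' = S̃_{k+p+1}^n − S̃_{p+n}^n · S̃_k^n`. -/
theorem momL2_evolution (p : ℕ) (hp : 1 ≤ p) (T : ℝ) (hT : 0 < T)
    (b : ℤ → ℝ → ℂ)
    (hbneg : ∀ l : ℤ, l < 0 → ∀ t : ℝ, b l t = 0)
    (hbne : ∀ i : ℤ, 0 ≤ i → ∀ t ∈ Set.Ico (0 : ℝ) T, b i t ≠ 0)
    (hbode : ∀ i : ℤ, 0 ≤ i → ∀ t ∈ Set.Ico (0 : ℝ) T, HasDerivWithinAt (b i)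
      (b i t * (∑ j ∈ Finset.Icc 1 p, b (i + (j : ℤ)) t -
        ∑ j ∈ Finset.Icc 1 p, b (i - (j : ℤ)) t)) (Set.Ico (0 : ℝ) T) t) :
    ∀ k n : ℕ, 1 ≤ n → n ≤ p → ∀ t ∈ Set.Ico (0 : ℝ) T,
      HasDerivWithinAt (fun s => momL2 p (fun m : ℕ => b (m : ℤ) s) k n)
        (momL2 p (fun m : ℕ => b (m : ℤ) t) (k + p + 1) n -
          momL2 p (fun m : ℕ => b (m : ℤ) t) (p + n) n *
            momL2 p (fun m : ℕ => b (m : ℤ) t) k n)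
        (Set.Ico (0 : ℝ) T) t :=
  momL2_evolution_general p T b hbneg hbode
end
end

section
/- Let p ≥ 1 and let (α_i)_{i≥0} and (β_i)_{i≥0} be bounded sequences of nonzero complex numbers. Then there exists δ > 0 such that: (1) the Cauchy problem for the semi-infinite lattice a_i' = a_i(∏_{j=1}^p a_{i+j} − ∏_{j=1}^p a_{i−j}) with a_i(0) = α_i has exactly one solution (a_i)_{i≥0} on [0,δ) in the class of bounded solutions (sup_{i,t} |a_i(t)| < ∞); and (2) the Cauchy problem for the semi-infinite lattice b_i' = b_i(Σ_{j=1}^p b_{i+j} − Σ_{j=1}^p b_{i−j}) with b_i(0) = β_i has exactly one bounded solution (b_i)_{i≥0} on [0,δ). -/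
/-!
Both lattices are autonomous ODEs on the Banach space `ℓ^∞(ℤ, ℂ)` whose right-hand sides are
built from shifts, sums and products of coordinates, so they are Lipschitz on bounded sets and
Picard–Lindelöf gives a local solution. A bounded solution need not be differentiable as an
`ℓ^∞`-valued curve, so uniqueness is proved coordinatewise: the difference `d` of two bounded
solutions satisfies `‖d_i(t)‖ ≤ M (K t)^n / n!` for all `i` and `n`, by induction on `n`
using the Lipschitz bound on the right-hand side, and letting `n → ∞` gives `d = 0`.
-/

open scoped BigOperators

noncomputable section

/-- `a` is a bounded solution on `[0,δ)` of the semi-infinite Bogoyavlensky lattice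
`a_i' = a_i (∏_{j=1}^p a_{i+j} − ∏_{j=1}^p a_{i−j})` with initial data `α`. -/
def IsBoundedSolA (p : ℕ) (δ : ℝ) (α : ℕ → ℂ) (a : ℤ → ℝ → ℂ) : Prop :=
  (∀ l : ℤ, l < 0 → ∀ t ∈ Set.Ico (0 : ℝ) δ, a l t = 0) ∧
  (∀ i : ℤ, 0 ≤ i → ∀ t ∈ Set.Ico (0 : ℝ) δ, HasDerivWithinAt (a i)
    (a i t * (∏ j ∈ Finset.Icc 1 p, a (i + (j : ℤ)) t -
      ∏ j ∈ Finset.Icc 1 p, a (i - (j : ℤ)) t)) (Set.Ico (0 : ℝ) δ) t) ∧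
  (∃ C : ℝ, ∀ i : ℤ, ∀ t ∈ Set.Ico (0 : ℝ) δ, ‖a i t‖ ≤ C) ∧
  (∀ i : ℕ, a (i : ℤ) 0 = α i)

/-- `b` is a bounded solution on `[0,δ)` of the semi-infinite Bogoyavlensky lattice
`b_i' = b_i (Σ_{j=1}^p b_{i+j} − Σ_{j=1}^p b_{i−j})` with initial data `β`. -/
def IsBoundedSolB (p : ℕ) (δ : ℝ) (β : ℕ → ℂ) (b : ℤ → ℝ → ℂ) : Prop :=
  (∀ l : ℤ, l < 0 → ∀ t ∈ Set.Ico (0 : ℝ) δ, b l t = 0) ∧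
  (∀ i : ℤ, 0 ≤ i → ∀ t ∈ Set.Ico (0 : ℝ) δ, HasDerivWithinAt (b i)
    (b i t * (∑ j ∈ Finset.Icc 1 p, b (i + (j : ℤ)) t -
      ∑ j ∈ Finset.Icc 1 p, b (i - (j : ℤ)) t)) (Set.Ico (0 : ℝ) δ) t) ∧
  (∃ C : ℝ, ∀ i : ℤ, ∀ t ∈ Set.Ico (0 : ℝ) δ, ‖b i t‖ ≤ C) ∧
  (∀ i : ℕ, b (i : ℤ) 0 = β i)

open Set Metric Filter Topology BoundedContinuousFunction
open scoped NNReal Nat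

section Gronwall

variable {ι E : Type*} [NormedAddCommGroup E] [NormedSpace ℝ E] {d g : ι → ℝ → E} {δ K M : ℝ}

theorem norm_le_mul_pow_div_factorial_of_norm_deriv_le (hd0 : ∀ i, d i 0 = 0)
    (hd : ∀ i, ∀ t ∈ Ico 0 δ, HasDerivWithinAt (d i) (g i t) (Ico 0 δ) t)
    (hM : ∀ i, ∀ t ∈ Ico 0 δ, ‖d i t‖ ≤ M)
    (hg : ∀ t ∈ Ico 0 δ, ∀ h, (∀ j, ‖d j t‖ ≤ h) → ∀ i, ‖g i t‖ ≤ K * h) (n : ℕ) :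
    ∀ i, ∀ t ∈ Ico 0 δ, ‖d i t‖ ≤ M * (K * t) ^ n / n ! := by
  induction n with
  | zero => simpa using hM
  | succ n ih =>
    intro i t ht
    have hsub : Icc 0 t ⊆ Ico 0 δ := Icc_subset_Ico_right ht.2
    have hB : ∀ s, HasDerivAt (fun s => M * (K * s) ^ (n + 1) / (n + 1)!)
        (K * (M * (K * s) ^ n / n !)) s := by
      intro s
      refine ((((hasDerivAt_id' s).const_mul K).fun_pow (n + 1)).const_mul M).div_const
        ((n + 1)! : ℝ) |>.congr_deriv ?_
      rw [Nat.factorial_succ, Nat.add_sub_cancel]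
      push_cast
      field_simp
    refine image_norm_le_of_norm_deriv_right_le_deriv_boundary
      (fun s hs => ((hd i s (hsub hs)).continuousWithinAt).mono hsub)
      (fun s hs => (hd i s (hsub (Ico_subset_Icc_self hs))).mono_of_mem_nhdsWithin
        (Ico_mem_nhdsGE_of_mem ⟨hs.1, hs.2.trans ht.2⟩))
      (by simp [hd0]) hB
      (fun s hs => hg s (hsub (Ico_subset_Icc_self hs)) _
        (fun j => ih j s (hsub (Ico_subset_Icc_self hs))) i) ⟨ht.1, le_rfl⟩

theorem eq_zero_of_norm_deriv_le_mul_of_forall_norm_le (hd0 : ∀ i, d i 0 = 0)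
    (hd : ∀ i, ∀ t ∈ Ico 0 δ, HasDerivWithinAt (d i) (g i t) (Ico 0 δ) t)
    (hM : ∀ i, ∀ t ∈ Ico 0 δ, ‖d i t‖ ≤ M)
    (hg : ∀ t ∈ Ico 0 δ, ∀ h, (∀ j, ‖d j t‖ ≤ h) → ∀ i, ‖g i t‖ ≤ K * h) :
    ∀ i, ∀ t ∈ Ico 0 δ, d i t = 0 := by
  intro i t ht
  have hlim : Tendsto (fun n : ℕ => M * (K * t) ^ n / n !) atTop (𝓝 0) := by
    simpa [mul_div_assoc] using (FloorSemiring.tendsto_pow_div_factorial_atTop (K * t)).const_mul M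
  exact norm_le_zero_iff.1 <| ge_of_tendsto' hlim fun n =>
    norm_le_mul_pow_div_factorial_of_norm_deriv_le hd0 hd hM hg n i t ht

end Gronwall

theorem exists_forall_mem_Icc_hasDerivWithinAt_of_lipschitzOnWith {E : Type*}
    [NormedAddCommGroup E] [NormedSpace ℝ E] [CompleteSpace E] {f : E → E} {x₀ : E} {r K : ℝ≥0}
    (hr : 0 < r) (hf : LipschitzOnWith K f (closedBall x₀ r)) :
    ∃ δ > 0, ∃ γ : ℝ → E, γ 0 = x₀ ∧ ∀ t ∈ Icc 0 δ, HasDerivWithinAt γ (f (γ t)) (Icc 0 δ) t := by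
  set L : ℝ≥0 := ‖f x₀‖₊ + K * r
  have hL : ∀ x ∈ closedBall x₀ r, ‖f x‖ ≤ L := fun x hx => calc
    ‖f x‖ ≤ ‖f x₀‖ + ‖f x - f x₀‖ := norm_le_norm_add_norm_sub' _ _
    _ ≤ ‖f x₀‖ + K * r := by
      gcongr
      exact (hf.norm_sub_le hx (mem_closedBall_self r.2)).trans
        (by gcongr; exact mem_closedBall_iff_norm.1 hx)
  set δ : ℝ := r / (L + 1)
  have hδ : 0 < δ := by positivity
  have hLδ : (L : ℝ) * δ ≤ r := by
    rw [mul_div_assoc', div_le_iff₀ (by positivity)]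
    nlinarith [r.2]
  have hPL := IsPicardLindelof.of_time_independent (t₀ := ⟨0, le_rfl, hδ.le⟩) (r := 0) hL hf
    (by simpa [hδ.le] using hLδ)
  exact ⟨δ, hδ, hPL.exists_eq_forall_mem_Icc_hasDerivWithinAt₀⟩

/-- Bounds and Lipschitz constants are for the sup norm, so `F` induces a map of `ℓ^∞(ι, E)`
that is bounded and Lipschitz on bounded sets. -/
structure LipschitzOnBounded {ι E E' : Type*} [SeminormedAddCommGroup E]
    [SeminormedAddCommGroup E'] (F : (ι → E) → ι → E') : Prop where
  bounded : ∀ R : ℝ, ∃ C : ℝ≥0, ∀ x : ι → E, (∀ j, ‖x j‖ ≤ R) → ∀ i, ‖F x i‖ ≤ C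
  lipschitz : ∀ R : ℝ, ∃ K : ℝ≥0, ∀ x y : ι → E, (∀ j, ‖x j‖ ≤ R) → (∀ j, ‖y j‖ ≤ R) →
    ∀ h : ℝ, (∀ j, ‖x j - y j‖ ≤ h) → ∀ i, ‖F x i - F y i‖ ≤ K * h

namespace LipschitzOnBounded

variable {ι κ E E' A : Type*} [SeminormedAddCommGroup E] [SeminormedAddCommGroup E']
  {F G : (ι → E) → ι → E'}

theorem const (c : E') : LipschitzOnBounded fun (_ : ι → E) (_ : ι) => c where
  bounded _ := ⟨‖c‖₊, fun _ _ _ => le_rfl⟩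
  lipschitz _ := ⟨0, fun _ _ _ _ _ _ _ => by simp⟩

theorem reindex (σ : ι → ι) : LipschitzOnBounded fun (x : ι → E) i => x (σ i) where
  bounded R := ⟨R.toNNReal, fun _ hx i => (hx _).trans (Real.le_coe_toNNReal R)⟩
  lipschitz _ := ⟨1, fun _ _ _ _ _ hxy i => by simpa using hxy (σ i)⟩

theorem add (hF : LipschitzOnBounded F) (hG : LipschitzOnBounded G) :
    LipschitzOnBounded fun x i => F x i + G x i where
  bounded R := by
    obtain ⟨CF, hCF⟩ := hF.bounded R
    obtain ⟨CG, hCG⟩ := hG.bounded R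
    exact ⟨CF + CG, fun x hx i => by
      push_cast; exact (norm_add_le _ _).trans (add_le_add (hCF x hx i) (hCG x hx i))⟩
  lipschitz R := by
    obtain ⟨KF, hKF⟩ := hF.lipschitz R
    obtain ⟨KG, hKG⟩ := hG.lipschitz R
    refine ⟨KF + KG, fun x y hx hy h hxy i => ?_⟩
    calc ‖F x i + G x i - (F y i + G y i)‖ = ‖(F x i - F y i) + (G x i - G y i)‖ := by
          rw [add_sub_add_comm]
      _ ≤ KF * h + KG * h :=
          (norm_add_le _ _).trans (add_le_add (hKF x y hx hy h hxy i) (hKG x y hx hy h hxy i))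
      _ = ↑(KF + KG) * h := by push_cast; ring

theorem neg (hF : LipschitzOnBounded F) : LipschitzOnBounded fun x i => -F x i where
  bounded R := by
    obtain ⟨C, hC⟩ := hF.bounded R
    exact ⟨C, fun x hx i => by simpa using hC x hx i⟩
  lipschitz R := by
    obtain ⟨K, hK⟩ := hF.lipschitz R
    exact ⟨K, fun x y hx hy h hxy i => by
      rw [neg_sub_neg, norm_sub_rev]; exact hK x y hx hy h hxy i⟩

theorem sub (hF : LipschitzOnBounded F) (hG : LipschitzOnBounded G) :
    LipschitzOnBounded fun x i => F x i - G x i := by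
  simpa only [sub_eq_add_neg] using hF.add hG.neg

theorem ite (p : ι → Prop) [DecidablePred p] (hF : LipschitzOnBounded F) :
    LipschitzOnBounded fun x i => if p i then F x i else 0 where
  bounded R := by
    obtain ⟨C, hC⟩ := hF.bounded R
    exact ⟨C, fun x hx i => by split_ifs <;> simp [hC x hx i]⟩
  lipschitz R := by
    obtain ⟨K, hK⟩ := hF.lipschitz R
    refine ⟨K, fun x y hx hy h hxy i => ?_⟩
    split_ifs
    · exact hK x y hx hy h hxy i
    · simpa using mul_nonneg K.2 ((norm_nonneg _).trans (hxy i))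

theorem sum (s : Finset κ) {F : κ → (ι → E) → ι → E'}
    (hF : ∀ k ∈ s, LipschitzOnBounded (F k)) :
    LipschitzOnBounded fun x i => ∑ k ∈ s, F k x i := by
  classical
  induction s using Finset.induction_on with
  | empty => simpa using const (ι := ι) (E := E) (0 : E')
  | insert k s hk ih =>
    simp_rw [Finset.sum_insert hk]
    exact (hF k (s.mem_insert_self k)).add (ih fun k' hk' => hF k' (s.mem_insert_of_mem hk'))

section NonUnitalRing

variable [NonUnitalSeminormedRing A] {F G : (ι → E) → ι → A}

theorem mul (hF : LipschitzOnBounded F) (hG : LipschitzOnBounded G) :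
    LipschitzOnBounded fun x i => F x i * G x i where
  bounded R := by
    obtain ⟨CF, hCF⟩ := hF.bounded R
    obtain ⟨CG, hCG⟩ := hG.bounded R
    exact ⟨CF * CG, fun x hx i => by
      push_cast
      exact (norm_mul_le _ _).trans
        (mul_le_mul (hCF x hx i) (hCG x hx i) (norm_nonneg _) CF.2)⟩
  lipschitz R := by
    obtain ⟨CF, hCF⟩ := hF.bounded R
    obtain ⟨CG, hCG⟩ := hG.bounded R
    obtain ⟨KF, hKF⟩ := hF.lipschitz R
    obtain ⟨KG, hKG⟩ := hG.lipschitz R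
    refine ⟨CF * KG + KF * CG, fun x y hx hy h hxy i => ?_⟩
    have hF' := hKF x y hx hy h hxy i
    have hG' := hKG x y hx hy h hxy i
    calc ‖F x i * G x i - F y i * G y i‖
        = ‖F x i * (G x i - G y i) + (F x i - F y i) * G y i‖ := by
          rw [mul_sub, sub_mul]; abel_nf
      _ ≤ ‖F x i‖ * ‖G x i - G y i‖ + ‖F x i - F y i‖ * ‖G y i‖ :=
          (norm_add_le _ _).trans (add_le_add (norm_mul_le _ _) (norm_mul_le _ _))
      _ ≤ CF * (KG * h) + KF * h * CG :=
          add_le_add (mul_le_mul (hCF x hx i) hG' (norm_nonneg _) CF.2)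
            (mul_le_mul hF' (hCG y hy i) (norm_nonneg _) ((norm_nonneg _).trans hF'))
      _ = ↑(CF * KG + KF * CG) * h := by push_cast; ring

end NonUnitalRing

theorem prod [SeminormedCommRing A] (s : Finset κ) {F : κ → (ι → E) → ι → A}
    (hF : ∀ k ∈ s, LipschitzOnBounded (F k)) :
    LipschitzOnBounded fun x i => ∏ k ∈ s, F k x i := by
  classical
  induction s using Finset.induction_on with
  | empty => simpa using const (ι := ι) (E := E) (1 : A)
  | insert k s hk ih =>
    simp_rw [Finset.prod_insert hk]
    exact (hF k (s.mem_insert_self k)).mul (ih fun k' hk' => hF k' (s.mem_insert_of_mem hk'))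

end LipschitzOnBounded

namespace LipschitzOnBounded

variable {ι E : Type*} [TopologicalSpace ι] [DiscreteTopology ι] [NormedAddCommGroup E]
  {F : (ι → E) → ι → E}

def toBCF (hF : LipschitzOnBounded F) (x : ι →ᵇ E) : ι →ᵇ E :=
  ofNormedAddCommGroupDiscrete (F x) (hF.bounded ‖x‖).choose
    ((hF.bounded ‖x‖).choose_spec x x.norm_coe_le_norm)

theorem toBCF_apply (hF : LipschitzOnBounded F) (x : ι →ᵇ E) (i : ι) : hF.toBCF x i = F x i :=
  rfl

theorem exists_lipschitzOnWith_toBCF (hF : LipschitzOnBounded F) (x₀ : ι →ᵇ E) (r : ℝ) :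
    ∃ K, LipschitzOnWith K hF.toBCF (closedBall x₀ r) := by
  obtain ⟨K, hK⟩ := hF.lipschitz (‖x₀‖ + r)
  have hbd : ∀ x ∈ closedBall x₀ r, ∀ j, ‖x j‖ ≤ ‖x₀‖ + r := fun x hx j =>
    (x.norm_coe_le_norm j).trans (norm_le_of_mem_closedBall hx)
  refine ⟨K, LipschitzOnWith.of_dist_le_mul fun x hx y hy => ?_⟩
  refine (dist_le (by positivity)).2 fun i => ?_
  have hcoord : ∀ j, ‖x j - y j‖ ≤ dist x y := fun j => by
    simpa only [dist_eq_norm] using dist_coe_le_dist (f := x) (g := y) j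
  simpa only [dist_eq_norm, toBCF_apply] using hK x y (hbd x hx) (hbd y hy) _ hcoord i

theorem exists_hasDerivWithinAt [NormedSpace ℝ E] [CompleteSpace E] (hF : LipschitzOnBounded F)
    (x₀ : ι →ᵇ E) :
    ∃ δ > 0, ∃ a : ι → ℝ → E, (∀ i, a i 0 = x₀ i) ∧
      (∃ C, ∀ i, ∀ t ∈ Icc 0 δ, ‖a i t‖ ≤ C) ∧
      ∀ i, ∀ t ∈ Icc 0 δ, HasDerivWithinAt (a i) (F (fun j => a j t) i) (Icc 0 δ) t := by
  obtain ⟨K, hK⟩ := hF.exists_lipschitzOnWith_toBCF x₀ 1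
  obtain ⟨δ, hδ, γ, hγ0, hγ⟩ :=
    exists_forall_mem_Icc_hasDerivWithinAt_of_lipschitzOnWith one_pos (by simpa using hK)
  obtain ⟨C, hC⟩ := isCompact_Icc.exists_bound_of_continuousOn
    fun t ht => (hγ t ht).continuousWithinAt
  exact ⟨δ, hδ, fun i t => γ t i, fun i => by simp only [hγ0],
    ⟨C, fun i t ht => (norm_coe_le_norm _ i).trans (hC t ht)⟩,
    fun i t ht => (evalCLM ℝ (α := ι) (β := E) i).hasFDerivAt.comp_hasDerivWithinAt t (hγ t ht)⟩

end LipschitzOnBounded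

section BoundedSolution

variable {E : Type*} [NormedAddCommGroup E] [NormedSpace ℝ E] {F : (ℤ → E) → ℤ → E}
  {δ δ' : ℝ} {α : ℕ → E} {a a' : ℤ → ℝ → E}

def IsBoundedSol (F : (ℤ → E) → ℤ → E) (δ : ℝ) (α : ℕ → E) (a : ℤ → ℝ → E) : Prop :=
  (∀ l : ℤ, l < 0 → ∀ t ∈ Ico 0 δ, a l t = 0) ∧
  (∀ i : ℤ, 0 ≤ i → ∀ t ∈ Ico 0 δ, HasDerivWithinAt (a i) (F (fun j => a j t) i) (Ico 0 δ) t) ∧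
  (∃ C : ℝ, ∀ i : ℤ, ∀ t ∈ Ico 0 δ, ‖a i t‖ ≤ C) ∧
  (∀ i : ℕ, a i 0 = α i)

theorem IsBoundedSol.mono (ha : IsBoundedSol F δ α a) (hδ : δ' ≤ δ) : IsBoundedSol F δ' α a := by
  obtain ⟨hneg, hder, ⟨C, hC⟩, hinit⟩ := ha
  have hsub : Ico 0 δ' ⊆ Ico 0 δ := Ico_subset_Ico_right hδ
  exact ⟨fun l hl t ht => hneg l hl t (hsub ht),
    fun i hi t ht => (hder i hi t (hsub ht)).mono hsub, ⟨C, fun i t ht => hC i t (hsub ht)⟩, hinit⟩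

theorem IsBoundedSol.eq (hF : LipschitzOnBounded F) (ha : IsBoundedSol F δ α a)
    (ha' : IsBoundedSol F δ α a') : ∀ i, ∀ t ∈ Ico 0 δ, a i t = a' i t := by
  obtain ⟨hneg, hder, ⟨C, hC⟩, hinit⟩ := ha
  obtain ⟨hneg', hder', ⟨C', hC'⟩, hinit'⟩ := ha'
  obtain ⟨K, hK⟩ := hF.lipschitz (max C C')
  have hbd : ∀ t ∈ Ico 0 δ, ∀ j, ‖a j t‖ ≤ max C C' := fun t ht j =>
    (hC j t ht).trans (le_max_left ..)
  have hbd' : ∀ t ∈ Ico 0 δ, ∀ j, ‖a' j t‖ ≤ max C C' := fun t ht j =>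
    (hC' j t ht).trans (le_max_right ..)
  have heq_neg : ∀ j : ℤ, j < 0 → ∀ t ∈ Ico 0 δ, a j t = a' j t := fun j hj t ht => by
    rw [hneg j hj t ht, hneg' j hj t ht]
  -- The Grönwall argument runs over the coordinates `i ≥ 0`, where the equation holds.
  have heq_nat : ∀ n : ℕ, ∀ t ∈ Ico 0 δ, a n t - a' n t = 0 := by
    refine eq_zero_of_norm_deriv_le_mul_of_forall_norm_le (M := 2 * max C C') (K := K)
      (d := fun (n : ℕ) t => a n t - a' n t)
      (g := fun n t => F (fun j => a j t) n - F (fun j => a' j t) n)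
      (fun n => by rw [hinit, hinit', sub_self])
      (fun n t ht => (hder n n.cast_nonneg' t ht).sub (hder' n n.cast_nonneg' t ht))
      (fun n t ht => (norm_sub_le _ _).trans (by linarith [hbd t ht n, hbd' t ht n]))
      fun t ht h hh n => hK _ _ (hbd t ht) (hbd' t ht) h (fun j => ?_) n
    rcases lt_or_ge j 0 with hj | hj
    · simpa [heq_neg j hj t ht] using (norm_nonneg _).trans (hh 0)
    · lift j to ℕ using hj
      exact hh j
  intro i t ht
  rcases lt_or_ge i 0 with hi | hi
  · exact heq_neg i hi t ht
  · lift i to ℕ using hi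
    exact sub_eq_zero.1 (heq_nat i t ht)

def extendByZeroBCF (α : ℕ → E) (hα : ∃ C, ∀ i, ‖α i‖ ≤ C) : ℤ →ᵇ E :=
  ofNormedAddCommGroupDiscrete (fun i => if 0 ≤ i then α i.toNat else 0) hα.choose fun i => by
    split_ifs
    · exact hα.choose_spec _
    · simpa using (norm_nonneg _).trans (hα.choose_spec 0)

theorem exists_isBoundedSol [CompleteSpace E] (hF : LipschitzOnBounded F)
    (hα : ∃ C, ∀ i, ‖α i‖ ≤ C) : ∃ δ > 0, ∃ a, IsBoundedSol F δ α a := by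
  -- Solve in `ℓ^∞(ℤ, E)` the equation whose field is cut off to `0` at negative indices.
  obtain ⟨δ, hδ, a, h0, ⟨C, hC⟩, hder⟩ :=
    (hF.ite (0 ≤ ·)).exists_hasDerivWithinAt (extendByZeroBCF α hα)
  have hneg : ∀ l : ℤ, l < 0 → ∀ t ∈ Icc 0 δ, a l t = 0 := fun l hl t ht => by
    have hconst := constant_of_has_deriv_right_zero (f := a l)
      (fun s hs => (hder l s hs).continuousWithinAt)
      (fun s hs => by
        simpa [hl.not_ge] using (hder l s (Ico_subset_Icc_self hs)).mono_of_mem_nhdsWithin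
          (Icc_mem_nhdsGE_of_mem hs)) t ht
    simp [hconst, h0, extendByZeroBCF, hl.not_ge]
  refine ⟨δ, hδ, a, fun l hl t ht => hneg l hl t (Ico_subset_Icc_self ht), fun i hi t ht => ?_,
    ⟨C, fun i t ht => hC i t (Ico_subset_Icc_self ht)⟩, fun i => by simp [h0, extendByZeroBCF]⟩
  simpa [hi] using (hder i t (Ico_subset_Icc_self ht)).mono Ico_subset_Icc_self

end BoundedSolution

def bogoyavlenskyProdField (p : ℕ) (x : ℤ → ℂ) (i : ℤ) : ℂ :=
  x i * (∏ j ∈ Finset.Icc 1 p, x (i + j) - ∏ j ∈ Finset.Icc 1 p, x (i - j))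

def bogoyavlenskySumField (p : ℕ) (x : ℤ → ℂ) (i : ℤ) : ℂ :=
  x i * (∑ j ∈ Finset.Icc 1 p, x (i + j) - ∑ j ∈ Finset.Icc 1 p, x (i - j))

theorem isBoundedSolA_eq (p : ℕ) : IsBoundedSolA p = IsBoundedSol (bogoyavlenskyProdField p) :=
  rfl

theorem isBoundedSolB_eq (p : ℕ) : IsBoundedSolB p = IsBoundedSol (bogoyavlenskySumField p) :=
  rfl

theorem lipschitzOnBounded_bogoyavlenskyProdField (p : ℕ) :
    LipschitzOnBounded (bogoyavlenskyProdField p) :=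
  (LipschitzOnBounded.reindex id).mul <|
    (LipschitzOnBounded.prod (Finset.Icc 1 p) fun j _ => .reindex (· + (j : ℤ))).sub
      (LipschitzOnBounded.prod (Finset.Icc 1 p) fun j _ => .reindex (· - (j : ℤ)))

theorem lipschitzOnBounded_bogoyavlenskySumField (p : ℕ) :
    LipschitzOnBounded (bogoyavlenskySumField p) :=
  (LipschitzOnBounded.reindex id).mul <|
    (LipschitzOnBounded.sum (Finset.Icc 1 p) fun j _ => .reindex (· + (j : ℤ))).sub
      (LipschitzOnBounded.sum (Finset.Icc 1 p) fun j _ => .reindex (· - (j : ℤ)))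

theorem local_existence_uniqueness_general (p : ℕ) (α β : ℕ → ℂ)
    (hαbd : ∃ C : ℝ, ∀ i, ‖α i‖ ≤ C) (hβbd : ∃ C : ℝ, ∀ i, ‖β i‖ ≤ C) :
    ∃ δ : ℝ, 0 < δ ∧
      (∃ a, IsBoundedSolA p δ α a) ∧
      (∀ a a', IsBoundedSolA p δ α a → IsBoundedSolA p δ α a' →
        ∀ i : ℤ, ∀ t ∈ Set.Ico (0 : ℝ) δ, a i t = a' i t) ∧
      (∃ b, IsBoundedSolB p δ β b) ∧
      (∀ b b', IsBoundedSolB p δ β b → IsBoundedSolB p δ β b' →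
        ∀ i : ℤ, ∀ t ∈ Set.Ico (0 : ℝ) δ, b i t = b' i t) := by
  rw [isBoundedSolA_eq, isBoundedSolB_eq]
  have hA := lipschitzOnBounded_bogoyavlenskyProdField p
  have hB := lipschitzOnBounded_bogoyavlenskySumField p
  obtain ⟨δa, hδa, a, ha⟩ := exists_isBoundedSol hA hαbd
  obtain ⟨δb, hδb, b, hb⟩ := exists_isBoundedSol hB hβbd
  exact ⟨min δa δb, lt_min hδa hδb, ⟨a, ha.mono (min_le_left ..)⟩, fun _ _ => IsBoundedSol.eq hA,
    ⟨b, hb.mono (min_le_right ..)⟩, fun _ _ => IsBoundedSol.eq hB⟩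

/-- Local existence and uniqueness of bounded solutions of the Cauchy problems for both
semi-infinite Bogoyavlensky lattices, for bounded nonvanishing initial data. -/
theorem local_existence_uniqueness (p : ℕ) (hp : 1 ≤ p) (α β : ℕ → ℂ)
    (hα : ∀ i, α i ≠ 0) (hβ : ∀ i, β i ≠ 0)
    (hαbd : ∃ C : ℝ, ∀ i, ‖α i‖ ≤ C) (hβbd : ∃ C : ℝ, ∀ i, ‖β i‖ ≤ C) :
    ∃ δ : ℝ, 0 < δ ∧
      (∃ a, IsBoundedSolA p δ α a) ∧
      (∀ a a', IsBoundedSolA p δ α a → IsBoundedSolA p δ α a' →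
        ∀ i : ℤ, ∀ t ∈ Set.Ico (0 : ℝ) δ, a i t = a' i t) ∧
      (∃ b, IsBoundedSolB p δ β b) ∧
      (∀ b b', IsBoundedSolB p δ β b → IsBoundedSolB p δ β b' →
        ∀ i : ℤ, ∀ t ∈ Set.Ico (0 : ℝ) δ, b i t = b' i t) :=
  local_existence_uniqueness_general p α β hαbd hβbd
end
end

section
/- Let p ≥ 2 and let (b_i)_{i≥0} be a solution of the semi-infinite lattice b_i' = b_i(Σ_{j=1}^p b_{i+j} − Σ_{j=1}^p b_{i−j}) on [0,T) with b_i(t) ≠ 0 (and b_l ≡ 0 for l < 0). Fix nonzero a_0(0), …, a_{p−2}(0) ∈ ℂ and define a_i(t) = a_i(0)·exp(∫_0^t b_{i+1}(τ)dτ) for 0 ≤ i ≤ p−2 and recursively a_i(t) = b_{i−p+1}(t)/(a_{i−p+1}(t)⋯a_{i−1}(t)) for i ≥ p−1. Let S_k^l(t) be the moments of L1(t) built from (a_i(t)) and S̃_k^l(t) the moments of L2(t) built from (b_i(t)). Then for all t ∈ [0,T) and k ≥ 0: S_k^1(t) = S̃_k^1(t), and for every 2 ≤ l ≤ p, S_k^l(t)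 = a_0(0)⋯a_{l−2}(0)·exp(∫_0^t (S̃_{l+p}^l(τ) − S̃_{p+1}^1(τ)) dτ)·S̃_k^l(t). -/
/-
Unwinding the recursive definition of `a` gives `b_m = a_m a_{m+1} ⋯ a_{m+p-1}`. Under this
relation `D L1ᵀ D⁻¹ = L2` for `D = diag(a_0 ⋯ a_{m-1})`, so `S_k^l = a_0 ⋯ a_{l-2} S̃_k^l`.
Since `L2` only moves up by one row or down by `p` rows,
`S̃_{l+p}^l - S̃_{p+1}^1 = b_1 + ⋯ + b_{l-1}`, and `a_i(t) = a_i(0) exp ∫_0^t b_{i+1}` for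
`i ≤ p - 2` turns the product `a_0(t) ⋯ a_{l-2}(t)` into the exponential.
-/

open scoped BigOperators

noncomputable section

namespace Miura

open Finset

variable (p : ℕ)

lemma L1apply_zero (a v : ℕ → ℂ) : L1apply p a v 0 = v p := by
  simp [L1apply, L1entry]

lemma L1apply_succ (a v : ℕ → ℂ) (m : ℕ) :
    L1apply p a v (m + 1) = v (m + 1 + p) + a m * v m := by
  rw [L1apply, sum_eq_add (m + 1 + p) m (by omega)]
  · simp [L1entry]
    omega
  · intro c _ hc
    simp [L1entry, hc.1]
    omega
  · simp
  · simp only [mem_range]; omega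

lemma L2apply_of_lt (b v : ℕ → ℂ) {i : ℕ} (hi : i < p) : L2apply p b v i = v (i + 1) := by
  rw [L2apply, sum_eq_single (i + 1)]
  · simp [L2entry]
  · intro c _ hc
    simp [L2entry, hc]
    omega
  · simp

lemma L2apply_add (b v : ℕ → ℂ) (i : ℕ) :
    L2apply p b v (i + p) = v (i + p + 1) + b i * v i := by
  rw [L2apply, sum_eq_add (i + p + 1) i (by omega)]
  · simp [L2entry]
    omega
  · intro c _ hc
    simp [L2entry, hc.1]
    omega
  · simp
  · simp only [mem_range]; omega

lemma L2apply_eq_ite (b v : ℕ → ℂ) (i : ℕ) :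
    L2apply p b v i = v (i + 1) + if p ≤ i then b (i - p) * v (i - p) else 0 := by
  obtain hi | ⟨j, rfl⟩ : i < p ∨ ∃ j, i = j + p :=
    (lt_or_ge i p).imp_right fun h => ⟨i - p, by omega⟩
  · simp [L2apply_of_lt p b v hi, not_le.mpr hi]
  · simp [L2apply_add]

lemma L2apply_stdBasis_zero (b : ℕ → ℂ) : L2apply p b (stdBasis 0) = b 0 • stdBasis p := by
  funext i
  simp only [L2apply_eq_ite, stdBasis, Pi.smul_apply, smul_eq_mul]
  split_ifs <;> simp_all
  omega

lemma L2apply_stdBasis_succ (b : ℕ → ℂ) (m : ℕ) :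
    L2apply p b (stdBasis (m + 1)) = stdBasis m + b (m + 1) • stdBasis (m + 1 + p) := by
  funext i
  simp only [L2apply_eq_ite, stdBasis, Pi.add_apply, Pi.smul_apply, smul_eq_mul]
  split_ifs <;> (try simp_all) <;> omega

def L2linearMap (b : ℕ → ℂ) : Module.End ℂ (ℕ → ℂ) where
  toFun := L2apply p b
  map_add' u v := funext fun i => by simp [L2apply, mul_add, sum_add_distrib]
  map_smul' c v := funext fun i => by simp [L2apply, mul_sum, mul_left_comm]

lemma iterate_L2apply_eq_pow (b : ℕ → ℂ) (k : ℕ) : (L2apply p b)^[k] = ⇑(L2linearMap p b ^ k) :=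
  (Module.End.coe_pow (L2linearMap p b) k).symm

def L1col0 (a : ℕ → ℂ) (k m : ℕ) : ℂ := (L1apply p a)^[k] (stdBasis 0) m

def L2row0 (b : ℕ → ℂ) (k m : ℕ) : ℂ := (L2apply p b)^[k] (stdBasis m) 0

lemma momL1_succ (a : ℕ → ℂ) (k m : ℕ) : momL1 p a k (m + 1) = L1col0 p a k m := rfl

lemma momL2_succ (b : ℕ → ℂ) (k m : ℕ) : momL2 p b k (m + 1) = L2row0 p b k m := rfl

section L1col0

variable (a : ℕ → ℂ) (k : ℕ)

lemma L1col0_zero_left (m : ℕ) : L1col0 p a 0 m = stdBasis 0 m := rfl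

lemma L1col0_succ_zero : L1col0 p a (k + 1) 0 = L1col0 p a k p := by
  rw [L1col0, Function.iterate_succ_apply', L1apply_zero]; rfl

lemma L1col0_succ_succ (m : ℕ) :
    L1col0 p a (k + 1) (m + 1) = L1col0 p a k (m + 1 + p) + a m * L1col0 p a k m := by
  rw [L1col0, Function.iterate_succ_apply', L1apply_succ]; rfl

end L1col0

section L2row0

variable (b : ℕ → ℂ) (k : ℕ)

lemma L2row0_zero_left (m : ℕ) : L2row0 p b 0 m = stdBasis m 0 := rfl

lemma L2row0_succ_zero : L2row0 p b (k + 1) 0 = b 0 * L2row0 p b k p := by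
  rw [L2row0, L2row0, Function.iterate_succ_apply, L2apply_stdBasis_zero, iterate_L2apply_eq_pow,
    map_smul, Pi.smul_apply, smul_eq_mul]

lemma L2row0_succ_succ (m : ℕ) :
    L2row0 p b (k + 1) (m + 1) = L2row0 p b k m + b (m + 1) * L2row0 p b k (m + 1 + p) := by
  rw [L2row0, L2row0, L2row0, Function.iterate_succ_apply, L2apply_stdBasis_succ,
    iterate_L2apply_eq_pow, map_add, map_smul, Pi.add_apply, Pi.smul_apply, smul_eq_mul]

lemma L2row0_of_lt {k m : ℕ} (h : k < m) : L2row0 p b k m = 0 := by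
  induction k generalizing m with
  | zero => simp only [L2row0_zero_left, stdBasis]; exact if_neg (by omega)
  | succ k ih =>
    obtain ⟨m, rfl⟩ : ∃ m', m = m' + 1 := ⟨m - 1, by omega⟩
    rw [L2row0_succ_succ, ih (by omega), ih (by omega), mul_zero, add_zero]

lemma L2row0_self : L2row0 p b k k = 1 := by
  induction k with
  | zero => simp [L2row0_zero_left, stdBasis]
  | succ k ih => rw [L2row0_succ_succ, ih, L2row0_of_lt p b (by omega), mul_zero, add_zero]

lemma L2row0_add_succ (m : ℕ) : L2row0 p b (m + 1 + p) m = ∑ i ∈ range (m + 1), b i := by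
  induction m with
  | zero => rw [zero_add, add_comm, L2row0_succ_zero, L2row0_self]; simp
  | succ m ih =>
    rw [show m + 1 + 1 + p = m + 1 + p + 1 by omega, L2row0_succ_succ, ih, L2row0_self,
      sum_range_succ _ (m + 1), mul_one]

end L2row0

lemma momL2_sub_momL2 (b : ℕ → ℂ) (n : ℕ) :
    momL2 p b (n + 1 + p) (n + 1) - momL2 p b (p + 1) 1 = ∑ i ∈ range n, b (i + 1) := by
  rw [momL2_succ, momL2_succ, L2row0_add_succ, add_comm p, ← zero_add 1, L2row0_add_succ,
    sum_range_succ' _ n]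
  simp

/-- Conjugating `L1ᵀ` by `diag(a_0 ⋯ a_{m-1})` gives `L2` when `b_m = a_m ⋯ a_{m+p-1}`. -/
theorem L1col0_eq_prod_mul_L2row0 {a b : ℕ → ℂ} (hb : ∀ m, b m = ∏ j ∈ range p, a (m + j))
    (k m : ℕ) : L1col0 p a k m = (∏ i ∈ range m, a i) * L2row0 p b k m := by
  induction k generalizing m with
  | zero => cases m <;> simp [L1col0_zero_left, L2row0_zero_left, stdBasis]
  | succ k ih =>
    have hwindow (m : ℕ) : ∏ i ∈ range (m + p), a i = (∏ i ∈ range m, a i) * b m := by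
      rw [prod_range_add, hb]
    cases m with
    | zero => rw [L1col0_succ_zero, L2row0_succ_zero, ih, ← zero_add p, hwindow]; simp
    | succ m =>
      rw [L1col0_succ_succ, L2row0_succ_succ, ih, ih, hwindow, prod_range_succ]
      ring

theorem momL1_eq_prod_mul_momL2 {a b : ℕ → ℂ} (hb : ∀ m, b m = ∏ j ∈ range p, a (m + j))
    (k m : ℕ) : momL1 p a k (m + 1) = (∏ i ∈ range m, a i) * momL2 p b k (m + 1) :=
  L1col0_eq_prod_mul_L2row0 p hb k m

end Miura

open Finset

section

variable {K : Type*} [Field K] {q : ℕ} {a b : ℕ → K}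

lemma ne_zero_of_eq_div_prod (ha : ∀ i < q, a i ≠ 0) (hb : ∀ m, b m ≠ 0)
    (hdiv : ∀ m, a (m + q) = b m / ∏ j ∈ range q, a (m + j)) (i : ℕ) : a i ≠ 0 := by
  induction i using Nat.strong_induction_on with
  | _ i ih =>
    obtain hi | ⟨m, rfl⟩ : i < q ∨ ∃ m, i = m + q :=
      (lt_or_ge i q).imp_right fun h => ⟨i - q, by omega⟩
    · exact ha i hi
    · rw [hdiv]
      refine div_ne_zero (hb m) (prod_ne_zero_iff.mpr fun j hj => ih _ ?_)
      rw [mem_range] at hj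
      omega

lemma eq_prod_of_eq_div_prod (ha : ∀ i < q, a i ≠ 0) (hb : ∀ m, b m ≠ 0)
    (hdiv : ∀ m, a (m + q) = b m / ∏ j ∈ range q, a (m + j)) (m : ℕ) :
    b m = ∏ j ∈ range (q + 1), a (m + j) := by
  have hprod : ∏ j ∈ range q, a (m + j) ≠ 0 :=
    prod_ne_zero_iff.mpr fun j _ => ne_zero_of_eq_div_prod ha hb hdiv _
  rw [prod_range_succ, hdiv, mul_div_cancel₀ _ hprod]

end

lemma prod_mul_exp_integral {ι : Type*} (s : Finset ι) (c : ι → ℂ) {f : ι → ℝ → ℂ} {t₀ t : ℝ}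
    (hf : ∀ i ∈ s, IntervalIntegrable (f i) MeasureTheory.volume t₀ t) :
    ∏ i ∈ s, c i * Complex.exp (∫ τ in t₀..t, f i τ) =
      (∏ i ∈ s, c i) * Complex.exp (∫ τ in t₀..t, ∑ i ∈ s, f i τ) := by
  rw [prod_mul_distrib, ← Complex.exp_sum, intervalIntegral.integral_finsetSum hf]

theorem miura_moments_inverse_general (p : ℕ) (hp : 2 ≤ p) (T : ℝ)
    (b : ℤ → ℝ → ℂ)
    (hbne : ∀ i : ℤ, 0 ≤ i → ∀ t ∈ Set.Ico (0 : ℝ) T, b i t ≠ 0)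
    (hbode : ∀ i : ℤ, 0 ≤ i → ∀ t ∈ Set.Ico (0 : ℝ) T, HasDerivWithinAt (b i)
      (b i t * (∑ j ∈ Finset.Icc 1 p, b (i + (j : ℤ)) t -
        ∑ j ∈ Finset.Icc 1 p, b (i - (j : ℤ)) t)) (Set.Ico (0 : ℝ) T) t)
    (α : ℤ → ℂ) (hα : ∀ i : ℤ, 0 ≤ i → i ≤ (p : ℤ) - 2 → α i ≠ 0)
    (a : ℤ → ℝ → ℂ)
    (hadef1 : ∀ i : ℤ, 0 ≤ i → i ≤ (p : ℤ) - 2 → ∀ t ∈ Set.Ico (0 : ℝ) T,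
      a i t = α i * Complex.exp (∫ τ in (0 : ℝ)..t, b (i + 1) τ))
    (hadef2 : ∀ i : ℤ, (p : ℤ) - 1 ≤ i → ∀ t ∈ Set.Ico (0 : ℝ) T,
      a i t = b (i - (p : ℤ) + 1) t /
        ∏ j ∈ Finset.range (p - 1), a (i - (p : ℤ) + 1 + (j : ℤ)) t) :
    ∀ t ∈ Set.Ico (0 : ℝ) T, ∀ k : ℕ,
      momL1 p (fun n : ℕ => a (n : ℤ) t) k 1 = momL2 p (fun n : ℕ => b (n : ℤ) t) k 1 ∧
      (∀ l : ℕ, 2 ≤ l → l ≤ p →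
        momL1 p (fun n : ℕ => a (n : ℤ) t) k l =
          (∏ i ∈ Finset.range (l - 1), α (i : ℤ)) *
            Complex.exp (∫ τ in (0 : ℝ)..t,
              (momL2 p (fun n : ℕ => b (n : ℤ) τ) (l + p) l -
                momL2 p (fun n : ℕ => b (n : ℤ) τ) (p + 1) 1)) *
            momL2 p (fun n : ℕ => b (n : ℤ) t) k l) := by
  intro t ht k
  obtain ⟨q, rfl⟩ : ∃ q, p = q + 1 := ⟨p - 1, by omega⟩
  have hinit (i : ℕ) (hi : i < q) :
      a i t = α i * Complex.exp (∫ τ in (0 : ℝ)..t, b ↑(i + 1) τ) := by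
    exact_mod_cast hadef1 i i.cast_nonneg (by omega) t ht
  have hdiv (m : ℕ) : a ↑(m + q) t = b m t / ∏ j ∈ range q, a ↑(m + j) t := by
    have h := hadef2 ↑(m + q) (by omega) t ht
    rw [show ((m + q : ℕ) : ℤ) - ↑(q + 1) + 1 = m by push_cast; ring, add_tsub_cancel_right] at h
    rw [h]
    push_cast
    rfl
  have hwindow := eq_prod_of_eq_div_prod (a := fun n : ℕ => a n t) (b := fun n : ℕ => b n t)
    (fun i hi => by
      rw [hinit i hi]
      exact mul_ne_zero (hα i i.cast_nonneg (by omega)) (Complex.exp_ne_zero _))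
    (fun m => hbne m m.cast_nonneg t ht) hdiv
  refine ⟨by simpa using Miura.momL1_eq_prod_mul_momL2 _ hwindow k 0, fun l hl2 hlp => ?_⟩
  obtain ⟨n, rfl⟩ : ∃ n, l = n + 1 := ⟨l - 1, by omega⟩
  have hint (i : ℕ) : IntervalIntegrable (b i) MeasureTheory.volume 0 t := by
    have hcont : ContinuousOn (b i) (Set.Ico 0 T) := fun s hs =>
      (hbode i i.cast_nonneg s hs).continuousWithinAt
    exact (hcont.mono (Set.uIcc_of_le ht.1 ▸ Set.Icc_subset_Ico_right ht.2)).intervalIntegrable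
  simp only [Miura.momL2_sub_momL2, add_tsub_cancel_right]
  rw [Miura.momL1_eq_prod_mul_momL2 _ hwindow,
    prod_congr rfl fun i hi => hinit i (by rw [mem_range] at hi; omega),
    prod_mul_exp_integral _ _ fun i _ => hint (i + 1)]

/-- Description of the inverse Miura transformation in terms of moments:
`S_k^1(t) = S̃_k^1(t)` and, for `2 ≤ l ≤ p`,
`S_k^l(t) = a_0(0) ⋯ a_{l−2}(0) · exp(∫_0^t (S̃_{l+p}^l − S̃_{p+1}^1)) · S̃_k^l(t)`. -/
theorem miura_moments_inverse (p : ℕ) (hp : 2 ≤ p) (T : ℝ) (hT : 0 < T)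
    (b : ℤ → ℝ → ℂ)
    (hbneg : ∀ l : ℤ, l < 0 → ∀ t : ℝ, b l t = 0)
    (hbne : ∀ i : ℤ, 0 ≤ i → ∀ t ∈ Set.Ico (0 : ℝ) T, b i t ≠ 0)
    (hbode : ∀ i : ℤ, 0 ≤ i → ∀ t ∈ Set.Ico (0 : ℝ) T, HasDerivWithinAt (b i)
      (b i t * (∑ j ∈ Finset.Icc 1 p, b (i + (j : ℤ)) t -
        ∑ j ∈ Finset.Icc 1 p, b (i - (j : ℤ)) t)) (Set.Ico (0 : ℝ) T) t)
    (α : ℤ → ℂ) (hα : ∀ i : ℤ, 0 ≤ i → i ≤ (p : ℤ) - 2 → α i ≠ 0)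
    (a : ℤ → ℝ → ℂ)
    (haneg : ∀ l : ℤ, l < 0 → ∀ t : ℝ, a l t = 0)
    (hadef1 : ∀ i : ℤ, 0 ≤ i → i ≤ (p : ℤ) - 2 → ∀ t ∈ Set.Ico (0 : ℝ) T,
      a i t = α i * Complex.exp (∫ τ in (0 : ℝ)..t, b (i + 1) τ))
    (hadef2 : ∀ i : ℤ, (p : ℤ) - 1 ≤ i → ∀ t ∈ Set.Ico (0 : ℝ) T,
      a i t = b (i - (p : ℤ) + 1) t /
        ∏ j ∈ Finset.range (p - 1), a (i - (p : ℤ) + 1 + (j : ℤ)) t) :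
    ∀ t ∈ Set.Ico (0 : ℝ) T, ∀ k : ℕ,
      momL1 p (fun n : ℕ => a (n : ℤ) t) k 1 = momL2 p (fun n : ℕ => b (n : ℤ) t) k 1 ∧
      (∀ l : ℕ, 2 ≤ l → l ≤ p →
        momL1 p (fun n : ℕ => a (n : ℤ) t) k l =
          (∏ i ∈ Finset.range (l - 1), α (i : ℤ)) *
            Complex.exp (∫ τ in (0 : ℝ)..t,
              (momL2 p (fun n : ℕ => b (n : ℤ) τ) (l + p) l -
                momL2 p (fun n : ℕ => b (n : ℤ) τ) (p + 1) 1)) *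
            momL2 p (fun n : ℕ => b (n : ℤ) t) k l) :=
  miura_moments_inverse_general p hp T b hbne hbode α hα a hadef1 hadef2
end
end

section
/- Let p ≥ 1, N ≥ 2p−1, and let a_0,…,a_N : I → ℂ be differentiable nowhere-vanishing functions on an interval I solving the finite Bogoyavlensky lattice a_i' = a_i(∏_{j=1}^p a_{i+j} − ∏_{j=1}^p a_{i−j}) for i = 0,…,N (with a_l ≡ 0 for l < 0 and l > N). Let S_k^m(t) := (L1_N(t)^k)_{m−1,0}. Suppose C_0,…,C_{N+1} : I → ℂ are differentiable and satisfy S_k^l(t) = Σ_{v=0}^{N+1} C_v(t)·S_{k−v−1}^l(t) for all integers k ≥ N+2, all 1 ≤ l ≤ p, and all t ∈ I, and suppose Δ_{N+1}(t) ≠ 0 for all t ∈ I, where Δ_{N+1}(t) = det(α_{ij}(t))_{i,j=0}^{N+1} with α_{ij} = S_{⌊i/p⌋+j}^{(i mod p)+1}. Then each C_v is constant on I (i.e., C_0,…,C_{N+1} are first integrals of the lattice). -/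
/-! Along the lattice, `L1N` satisfies the Lax equation `L' = L B - B L`, hence
`(L ^ k)' = L ^ k B - B L ^ k`. Rows `0, …, p` of `B` vanish and column `0` of `L ^ (p + 1)` is
that of `B` plus `a_0 ⋯ a_{p-1} e_0`, so the moments satisfy
`(S_k^l)' = S_{k+p+1}^l - a_0 ⋯ a_{p-1} S_k^l`. Differentiating `S_k^l = ∑_v C_v S_{k-v-1}^l` and
using the recurrence again at `k + p + 1` leaves `∑_v C_v' S_{k-v-1}^l = 0` for all `k ≥ N + 2`,
a homogeneous linear system in the `C_v'` whose matrix is `Δ_{N+1}`. -/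

open scoped BigOperators

noncomputable section

/-- The `(N+2)×(N+2)` matrix `L1_N`: `(L1_N)_{i,i+p} = 1`, `(L1_N)_{i+1,i} = a_i`,
all other entries zero. -/
def L1N (p N : ℕ) (a : ℕ → ℂ) : Matrix (Fin (N + 2)) (Fin (N + 2)) ℂ :=
  Matrix.of fun i j => if (j : ℕ) = (i : ℕ) + p then 1
    else if (i : ℕ) = (j : ℕ) + 1 then a (j : ℕ) else 0

open Fin.NatCast in
/-- The moments of `L1_N`: `S_k^m = (L1_N^k)_{m−1,0}`. -/
def momL1N (p N : ℕ) (a : ℕ → ℂ) (k m : ℕ) : ℂ :=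
  (L1N p N a ^ k) ((m - 1 : ℕ) : Fin (N + 2)) ((0 : ℕ) : Fin (N + 2))

open Finset

section Sums

variable {M : Type*} [AddCommMonoid M] {n : ℕ}

lemma sum_fin_ite_val_eq (c : ℕ) (f : Fin n → M) :
    (∑ m : Fin n, if (m : ℕ) = c then f m else 0) = if h : c < n then f ⟨c, h⟩ else 0 := by
  split_ifs with h
  · rw [Fintype.sum_eq_single ⟨c, h⟩ fun m hm => if_neg fun hc => hm (Fin.ext hc), if_pos rfl]
  · exact sum_eq_zero fun m _ => if_neg fun hc => h (by omega)

lemma sum_fin_ite_eq_val_add (c d : ℕ) (f : Fin n → M) :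
    (∑ m : Fin n, if c = (m : ℕ) + d then f m else 0) =
      if h : d ≤ c ∧ c - d < n then f ⟨c - d, h.2⟩ else 0 := by
  have hcond : ∀ m : Fin n, (c = (m : ℕ) + d) ↔ ((m : ℕ) = c - d ∧ d ≤ c) := fun m => by omega
  simp_rw [hcond, ite_and]
  by_cases hd : d ≤ c
  · simp only [hd, if_true, true_and, sum_fin_ite_val_eq]
  · simp [hd]

end Sums

section Products

variable {M : Type*} [CommMonoid M]

lemma prod_Icc_one_eq_prod_range (f : ℕ → M) (p : ℕ) :
    ∏ m ∈ Icc 1 p, f m = ∏ s ∈ range p, f (s + 1) := by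
  rw [← Ico_add_one_right_eq_Icc, prod_Ico_eq_prod_range, Nat.add_sub_cancel]
  simp only [add_comm]

lemma prod_range_succ_add_eq_mul_prod_Icc (f : ℤ → M) (j : ℤ) (p : ℕ) :
    ∏ s ∈ range (p + 1), f (j + s) = f j * ∏ m ∈ Icc 1 p, f (j + m) := by
  rw [prod_range_succ', prod_Icc_one_eq_prod_range, mul_comm]
  simp

lemma prod_range_succ_sub_eq_mul_prod_Icc (f : ℤ → M) (j : ℤ) (p : ℕ) :
    ∏ s ∈ range (p + 1), f (j - p + s) = f j * ∏ m ∈ Icc 1 p, f (j - m) := by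
  rw [← prod_range_reflect, prod_range_succ', prod_Icc_one_eq_prod_range, mul_comm]
  congr 1
  · simp
  · refine prod_congr rfl fun s hs => ?_
    have := mem_range.mp hs
    congr 1
    omega

lemma prod_range_succ_shift (f : ℕ → M) (p j : ℕ) :
    f (j + (p + 1)) * ∏ s ∈ range (p + 1), f (j + s)
      = (∏ s ∈ range (p + 1), f (j + 1 + s)) * f j := by
  rw [mul_comm, ← prod_range_succ (fun s => f (j + s)), prod_range_succ' (fun s => f (j + s))]
  simp only [add_zero, add_assoc, add_comm 1]

end Products

-- The strictly lower triangular part of `L1N ^ (p + 1)`.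
def B1N (p N : ℕ) (a : ℕ → ℂ) : Matrix (Fin (N + 2)) (Fin (N + 2)) ℂ :=
  Matrix.of fun i j => if (i : ℕ) = (j : ℕ) + (p + 1) then
    ∏ s ∈ range (p + 1), a ((j : ℕ) + s) else 0

section Matrices

variable {p N : ℕ} (A : ℕ → ℂ)

lemma L1N_apply (i j : Fin (N + 2)) :
    L1N p N A i j = if (j : ℕ) = (i : ℕ) + p then 1
      else if (i : ℕ) = (j : ℕ) + 1 then A (j : ℕ) else 0 := rfl

lemma B1N_apply (i j : Fin (N + 2)) :
    B1N p N A i j = if (i : ℕ) = (j : ℕ) + (p + 1) then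
      ∏ s ∈ range (p + 1), A ((j : ℕ) + s) else 0 := rfl

lemma B1N_apply_of_lt {i : Fin (N + 2)} (hi : (i : ℕ) < p + 1) (j : Fin (N + 2)) :
    B1N p N A i j = 0 :=
  if_neg (by omega)

lemma L1N_mul_B1N_apply (hA : ∀ n, N < n → A n = 0) (i j : Fin (N + 2)) :
    (L1N p N A * B1N p N A) i j =
      if (i : ℕ) = j + 1 then ∏ s ∈ range (p + 1), A (j + s)
      else if (i : ℕ) = j + (p + 2) then A (j + (p + 1)) * ∏ s ∈ range (p + 1), A (j + s)
      else 0 := by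
  simp_rw [Matrix.mul_apply, B1N_apply, mul_ite, mul_zero, sum_fin_ite_val_eq, L1N_apply]
  have := i.isLt
  split_ifs <;> first
    | omega
    | exact (prod_eq_zero (self_mem_range_succ p) (hA (j + p) (by omega))).symm
    | simp

lemma B1N_mul_L1N_apply (i j : Fin (N + 2)) :
    (B1N p N A * L1N p N A) i j =
      if (i : ℕ) = j + 1 ∧ p ≤ j then ∏ s ∈ range (p + 1), A (j - p + s)
      else if (i : ℕ) = j + (p + 2) then (∏ s ∈ range (p + 1), A (j + 1 + s)) * A j
      else 0 := by
  simp_rw [Matrix.mul_apply, B1N_apply, ite_mul, zero_mul, sum_fin_ite_eq_val_add, L1N_apply]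
  have := i.isLt
  split_ifs <;> first | omega | simp
  · exact prod_congr rfl fun s _ => congrArg A (by omega)
  · exact Or.inl (prod_congr rfl fun s _ => congrArg A (by omega))

lemma L1N_commutator_apply (hA : ∀ n, N < n → A n = 0) (i j : Fin (N + 2)) :
    (L1N p N A * B1N p N A - B1N p N A * L1N p N A) i j =
      if (i : ℕ) = j + 1 then
        ∏ s ∈ range (p + 1), A (j + s) - if p ≤ j then ∏ s ∈ range (p + 1), A (j - p + s) else 0
      else 0 := by
  rw [Matrix.sub_apply, L1N_mul_B1N_apply A hA, B1N_mul_L1N_apply, prod_range_succ_shift A p]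
  split_ifs <;> first | omega | simp

lemma L1N_pow_apply_zero_of_le {r : ℕ} (hr : r ≤ p) (hpN : p ≤ N + 1) (m : Fin (N + 2)) :
    (L1N p N A ^ r) m 0 = if (m : ℕ) = r then ∏ s ∈ range r, A s else 0 := by
  induction r generalizing m with
  | zero => simp only [pow_zero, Matrix.one_apply, Fin.ext_iff, Fin.val_zero, prod_range_zero]
  | succ r ih =>
    rw [pow_succ', Matrix.mul_apply]
    simp_rw [ih (by omega), mul_ite, mul_zero]
    rw [sum_fin_ite_val_eq, dif_pos (by omega), L1N_apply, prod_range_succ]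
    dsimp only
    split_ifs <;> first | omega | simp [mul_comm]

lemma L1N_pow_succ_apply_zero (hpN : p ≤ N) (m : Fin (N + 2)) :
    (L1N p N A ^ (p + 1)) m 0 = B1N p N A m 0 + if (m : ℕ) = 0 then ∏ s ∈ range p, A s else 0 := by
  have hcol := L1N_pow_apply_zero_of_le A le_rfl (show p ≤ N + 1 by omega)
  rw [pow_succ', Matrix.mul_apply]
  simp_rw [hcol, mul_ite, mul_zero]
  rw [sum_fin_ite_val_eq, dif_pos (by omega), L1N_apply, B1N_apply, prod_range_succ]
  simp only [Fin.val_zero, zero_add]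
  split_ifs <;> first | omega | simp [mul_comm]

open Fin.NatCast in
lemma momL1N_eq_apply {k l : ℕ} (hl : l - 1 < N + 2) :
    momL1N p N A k l = (L1N p N A ^ k) ⟨l - 1, hl⟩ 0 := by
  have h0 : ((0 : ℕ) : Fin (N + 2)) = 0 := Fin.ext (by simp)
  have hrow : ((l - 1 : ℕ) : Fin (N + 2)) = ⟨l - 1, hl⟩ := Fin.ext (by simp [Nat.mod_eq_of_lt hl])
  rw [momL1N, h0, hrow]

lemma L1N_pow_commutator_apply (hpN : p ≤ N) {l : ℕ} (hl : l ≤ p + 1) (k : ℕ) :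
    (L1N p N A ^ k * B1N p N A - B1N p N A * L1N p N A ^ k) ⟨l - 1, by omega⟩ 0 =
      momL1N p N A (k + (p + 1)) l - (∏ s ∈ range p, A s) * momL1N p N A k l := by
  have hBrow : (B1N p N A * L1N p N A ^ k) ⟨l - 1, by omega⟩ 0 = 0 := by
    rw [Matrix.mul_apply]
    exact Fintype.sum_eq_zero _ fun m => by rw [B1N_apply_of_lt A (by simp only; omega), zero_mul]
  rw [Matrix.sub_apply, hBrow, momL1N_eq_apply A (show l - 1 < N + 2 by omega),
    momL1N_eq_apply A (show l - 1 < N + 2 by omega), pow_add, Matrix.mul_apply, Matrix.mul_apply]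
  simp_rw [L1N_pow_succ_apply_zero A hpN, mul_add, mul_ite, mul_zero]
  rw [sum_add_distrib, sum_fin_ite_val_eq, dif_pos (by omega), sub_zero, Fin.zero_eta]
  ring

end Matrices

lemma Matrix.hasDerivWithinAt_pow_apply_of_lax {n R : Type*} [Fintype n] [DecidableEq n]
    [NormedCommRing R] [NormedAlgebra ℝ R] {M : ℝ → Matrix n n R} {B : Matrix n n R}
    {I : Set ℝ} {t : ℝ}
    (hM : ∀ i j, HasDerivWithinAt (fun s => M s i j) ((M t * B - B * M t) i j) I t)
    (k : ℕ) (i j : n) :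
    HasDerivWithinAt (fun s => (M s ^ k) i j) ((M t ^ k * B - B * M t ^ k) i j) I t := by
  induction k generalizing i j with
  | zero => simpa using hasDerivWithinAt_const t I ((1 : Matrix n n R) i j)
  | succ k ih =>
    have hleibniz : M t ^ (k + 1) * B - B * M t ^ (k + 1) =
        (M t ^ k * B - B * M t ^ k) * M t + M t ^ k * (M t * B - B * M t) := by
      rw [pow_succ]
      noncomm_ring
    rw [hleibniz, Matrix.add_apply, Matrix.mul_apply, Matrix.mul_apply, ← sum_add_distrib]
    simp only [pow_succ, Matrix.mul_apply]
    exact HasDerivWithinAt.fun_sum fun m _ => (ih i m).mul (hM m j)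

section Lattice

variable {p N : ℕ}

lemma bogoyavlensky_rhs_eq (a : ℤ → ℂ) (ha : ∀ l < 0, a l = 0) (j : ℕ) :
    a j * (∏ m ∈ Icc 1 p, a (j + m) - ∏ m ∈ Icc 1 p, a (j - m)) =
      ∏ s ∈ range (p + 1), a (j + s : ℕ) -
        if p ≤ j then ∏ s ∈ range (p + 1), a (j - p + s : ℕ) else 0 := by
  rw [mul_sub, ← prod_range_succ_add_eq_mul_prod_Icc]
  push_cast
  congr 1
  split_ifs with hpj
  · rw [← prod_range_succ_sub_eq_mul_prod_Icc]
    push_cast [hpj]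
    rfl
  · rw [prod_eq_zero (i := j + 1) (by simp; omega) (ha _ (by omega)), mul_zero]

variable {I : Set ℝ} {a : ℤ → ℝ → ℂ} {t : ℝ}

lemma hasDerivWithinAt_L1N_apply
    (haout : ∀ l : ℤ, l < 0 ∨ (N : ℤ) < l → a l t = 0)
    (haode : ∀ i : ℤ, 0 ≤ i → i ≤ (N : ℤ) → HasDerivWithinAt (a i)
      (a i t * (∏ j ∈ Icc 1 p, a (i + (j : ℤ)) t - ∏ j ∈ Icc 1 p, a (i - (j : ℤ)) t)) I t) (i j : Fin (N + 2)) :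
    HasDerivWithinAt (fun s => L1N p N (fun n : ℕ => a n s) i j)
      ((L1N p N (fun n : ℕ => a n t) * B1N p N (fun n : ℕ => a n t)
        - B1N p N (fun n : ℕ => a n t) * L1N p N (fun n : ℕ => a n t)) i j) I t := by
  rw [L1N_commutator_apply _ fun n hn => haout n (Or.inr (by exact_mod_cast hn))]
  by_cases hij : (i : ℕ) = j + 1
  · have hentry : (fun s => L1N p N (fun n : ℕ => a n s) i j) = a j := by
      funext s
      rw [L1N_apply, if_neg (by omega), if_pos hij]
    rw [if_pos hij, hentry, ← bogoyavlensky_rhs_eq (a · t) fun l hl => haout l (Or.inl hl)]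
    exact haode j (by positivity) (by omega)
  · simp only [L1N_apply, if_neg hij]
    split_ifs
    exacts [hasDerivWithinAt_const t I 1, hasDerivWithinAt_const t I 0]

lemma hasDerivWithinAt_momL1N (hpN : p ≤ N)
    (haout : ∀ l : ℤ, l < 0 ∨ (N : ℤ) < l → a l t = 0)
    (haode : ∀ i : ℤ, 0 ≤ i → i ≤ (N : ℤ) → HasDerivWithinAt (a i)
      (a i t * (∏ j ∈ Icc 1 p, a (i + (j : ℤ)) t - ∏ j ∈ Icc 1 p, a (i - (j : ℤ)) t)) I t) {l : ℕ} (hl : l ≤ p + 1) (k : ℕ) :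
    HasDerivWithinAt (fun s => momL1N p N (fun n : ℕ => a n s) k l)
      (momL1N p N (fun n : ℕ => a n t) (k + (p + 1)) l -
        (∏ s ∈ range p, a s t) * momL1N p N (fun n : ℕ => a n t) k l) I t := by
  rw [← L1N_pow_commutator_apply _ hpN hl]
  simp_rw [momL1N_eq_apply _ (show l - 1 < N + 2 by omega)]
  exact Matrix.hasDerivWithinAt_pow_apply_of_lax (hasDerivWithinAt_L1N_apply haout haode) k _ _

end Lattice

lemma sum_deriv_mul_eq_zero_of_recurrence {S C : ℕ → ℝ → ℂ} {C' : ℕ → ℂ} {c : ℂ} {q n : ℕ}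
    {I : Set ℝ} {x : ℝ} (hx : UniqueDiffWithinAt ℝ I x) (hxI : x ∈ I)
    (hS : ∀ k, HasDerivWithinAt (S k) (S (k + q) x - c * S k x) I x)
    (hC : ∀ v < n, HasDerivWithinAt (C v) (C' v) I x)
    (hrec : ∀ k, n ≤ k → ∀ y ∈ I, S k y = ∑ v ∈ range n, C v y * S (k - v - 1) y)
    {k : ℕ} (hk : n ≤ k) :
    ∑ v ∈ range n, C' v * S (k - v - 1) x = 0 := by
  have hsum := HasDerivWithinAt.fun_sum (u := range n) fun v hv =>
    (hC v (mem_range.mp hv)).mul (hS (k - v - 1))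
  have hrhs := (hS k).congr_of_mem (fun y hy => (hrec k hk y hy).symm) hxI
  have heq := hx.eq_deriv _ hsum hrhs
  have hshift : ∑ v ∈ range n, C v x * S (k - v - 1 + q) x = S (k + q) x := by
    rw [hrec (k + q) (by omega) x hxI]
    exact sum_congr rfl fun v hv => by rw [show k - v - 1 + q = k + q - v - 1 by
      have := mem_range.mp hv; omega]
  have hscale : ∑ v ∈ range n, C v x * (c * S (k - v - 1) x) = c * S k x := by
    rw [hrec k hk x hxI, mul_sum]
    exact sum_congr rfl fun v _ => by ring
  simp only [mul_sub, sum_add_distrib, sum_sub_distrib] at heq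
  linear_combination heq - hshift + hscale

lemma eq_zero_of_sum_mul_eq_zero_of_det_ne_zero {K : Type*} [Field K] {p n : ℕ} (hp : 0 < p)
    (S : ℕ → ℕ → K) (d : ℕ → K)
    (hdet : (Matrix.of fun i j : Fin n => S (i / p + j) (i % p + 1)).det ≠ 0)
    (hd : ∀ k, n ≤ k → ∀ l, 1 ≤ l → l ≤ p → ∑ v ∈ range n, d v * S (k - v - 1) l = 0)
    {v : ℕ} (hv : v < n) : d v = 0 := by
  have hker := Matrix.eq_zero_of_mulVec_eq_zero hdet (v := fun j => d (n - 1 - j)) <| by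
    funext i
    have hrow := hd (i / p + n) (Nat.le_add_left _ _) (i % p + 1) (Nat.le_add_left _ _)
      (Nat.mod_lt i hp)
    rw [← Fin.sum_univ_eq_sum_range] at hrow
    rw [Matrix.mulVec, dotProduct, Pi.zero_apply, ← hrow]
    refine Fintype.sum_bijective Fin.rev Fin.rev_involutive.bijective _ _ fun j => ?_
    rw [Fin.val_rev, Matrix.of_apply, mul_comm]
    generalize (i : ℕ) / p = q
    congr 2 <;> omega
  simpa [show n - 1 - (n - 1 - v) = v by omega] using congrFun hker ⟨n - 1 - v, by omega⟩

theorem FRC_C_first_integrals_general (p N : ℕ) (hp : 1 ≤ p) (hN : 2 * p - 1 ≤ N)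
    (I : Set ℝ) (hI : I.OrdConnected)
    (a : ℤ → ℝ → ℂ)
    (haout : ∀ l : ℤ, l < 0 ∨ (N : ℤ) < l → ∀ t : ℝ, a l t = 0)
    (haode : ∀ i : ℤ, 0 ≤ i → i ≤ (N : ℤ) → ∀ t ∈ I, HasDerivWithinAt (a i)
      (a i t * (∏ j ∈ Finset.Icc 1 p, a (i + (j : ℤ)) t -
        ∏ j ∈ Finset.Icc 1 p, a (i - (j : ℤ)) t)) I t)
    (C : ℕ → ℝ → ℂ)
    (hCdiff : ∀ v, v ≤ N + 1 → ∀ t ∈ I, DifferentiableWithinAt ℝ (C v) I t)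
    (hCrel : ∀ k, N + 2 ≤ k → ∀ l, 1 ≤ l → l ≤ p → ∀ t ∈ I,
      momL1N p N (fun n : ℕ => a (n : ℤ) t) k l =
        ∑ v ∈ Finset.range (N + 2), C v t *
          momL1N p N (fun n : ℕ => a (n : ℤ) t) (k - v - 1) l)
    (hΔ : ∀ t ∈ I, Matrix.det (Matrix.of fun i j : Fin (N + 2) =>
        momL1N p N (fun n : ℕ => a (n : ℤ) t) ((i : ℕ) / p + (j : ℕ)) ((i : ℕ) % p + 1)) ≠ 0) :
    ∀ v, v ≤ N + 1 → ∀ t ∈ I, ∀ s ∈ I, C v t = C v s := by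
  intro v hv t ht s hs
  have hconv : Convex ℝ I := hI.convex
  rcases I.subsingleton_or_nontrivial with hsub | hnt
  · exact congrArg (C v) (hsub ht hs)
  have hud : UniqueDiffOn ℝ I :=
    uniqueDiffOn_convex hconv (hconv.nontrivial_iff_nonempty_interior.mp hnt)
  have hderiv : ∀ x ∈ I, derivWithin (C v) I x = 0 := fun x hx =>
    eq_zero_of_sum_mul_eq_zero_of_det_ne_zero hp (momL1N p N fun n : ℕ => a n x)
      (fun w => derivWithin (C w) I x) (hΔ x hx)
      (fun k hk l hl hlp => sum_deriv_mul_eq_zero_of_recurrence (hud x hx) hx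
        (hasDerivWithinAt_momL1N (by omega) (fun l hl => haout l hl x)
          (fun i hi hiN => haode i hi hiN x hx) (by omega))
        (fun w hw => (hCdiff w (by omega) x hx).hasDerivWithinAt)
        (fun k hk y hy => hCrel k hk l hl hlp y hy) hk)
      (by omega)
  have hlip := hconv.norm_image_sub_le_of_norm_derivWithin_le
    (fun y hy => hCdiff v hv y hy) (fun y hy => (norm_eq_zero.mpr (hderiv y hy)).le) hs ht
  simpa [sub_eq_zero] using hlip

/-- The finite rank coefficients `C_0, …, C_{N+1}` are first integrals of the finite
Bogoyavlensky lattice `a_i' = a_i (∏_{j=1}^p a_{i+j} − ∏_{j=1}^p a_{i−j})`. -/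
theorem FRC_C_first_integrals (p N : ℕ) (hp : 1 ≤ p) (hN : 2 * p - 1 ≤ N)
    (I : Set ℝ) (hI : I.OrdConnected)
    (a : ℤ → ℝ → ℂ)
    (haout : ∀ l : ℤ, l < 0 ∨ (N : ℤ) < l → ∀ t : ℝ, a l t = 0)
    (hane : ∀ i : ℤ, 0 ≤ i → i ≤ (N : ℤ) → ∀ t ∈ I, a i t ≠ 0)
    (haode : ∀ i : ℤ, 0 ≤ i → i ≤ (N : ℤ) → ∀ t ∈ I, HasDerivWithinAt (a i)
      (a i t * (∏ j ∈ Finset.Icc 1 p, a (i + (j : ℤ)) t -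
        ∏ j ∈ Finset.Icc 1 p, a (i - (j : ℤ)) t)) I t)
    (C : ℕ → ℝ → ℂ)
    (hCdiff : ∀ v, v ≤ N + 1 → ∀ t ∈ I, DifferentiableWithinAt ℝ (C v) I t)
    (hCrel : ∀ k, N + 2 ≤ k → ∀ l, 1 ≤ l → l ≤ p → ∀ t ∈ I,
      momL1N p N (fun n : ℕ => a (n : ℤ) t) k l =
        ∑ v ∈ Finset.range (N + 2), C v t *
          momL1N p N (fun n : ℕ => a (n : ℤ) t) (k - v - 1) l)
    (hΔ : ∀ t ∈ I, Matrix.det (Matrix.of fun i j : Fin (N + 2) =>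
        momL1N p N (fun n : ℕ => a (n : ℤ) t) ((i : ℕ) / p + (j : ℕ)) ((i : ℕ) % p + 1)) ≠ 0) :
    ∀ v, v ≤ N + 1 → ∀ t ∈ I, ∀ s ∈ I, C v t = C v s :=
  FRC_C_first_integrals_general p N hp hN I hI a haout haode C hCdiff hCrel hΔ
end
end
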